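/- arXiv:math/0311384 — 10 statements merged into one kernel-verified Lean document; each statement's English description precedes it below -/
import Mathlib

section
/- Let {W_i}_{i∈I} be a family of closed subspaces of H with weights {v_i}. The following are equivalent: (1) {W_i} is a frame of subspaces with respect to {v_i} for H; (2) the synthesis operator T_{W,v}({f_i}) = Σ_i v_i f_i is a bounded linear surjection from (Σ_i ⊕ W_i)_{ℓ²} onto H; (3) the analysis operator T*_{W,v}(f) = {v_i π_{W_i}(f)} is bounded below (an isomorphism onto its range). -/
/-!
The analysis operator `f ↦ (v i • π_{W i} f)_i` is the adjoint of the synthesis operator, so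
the frame sum at `f` is `‖T* f‖²`. The upper frame bound is then automatic (`D = ‖T*‖²`) and
the lower one says that `T*` is bounded below. For any bounded operator `T` between Hilbert
spaces, `T` is onto iff `T*` is bounded below: one direction is the open mapping theorem, and for
the other, `T T*` is bounded below with dense range (its range is orthogonal to `ker T* = 0`),
hence onto.
-/

open scoped InnerProductSpace

namespace ContinuousLinearMap

variable {𝕜 E F : Type*} [RCLike 𝕜]
  [NormedAddCommGroup E] [InnerProductSpace 𝕜 E] [CompleteSpace E]
  [NormedAddCommGroup F] [InnerProductSpace 𝕜 F] [CompleteSpace F]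

theorem exists_mul_norm_le_norm_adjoint_of_surjective {T : E →L[𝕜] F}
    (hT : Function.Surjective T) : ∃ c, 0 < c ∧ ∀ y, c * ‖y‖ ≤ ‖adjoint T y‖ := by
  obtain ⟨C, hC, hpre⟩ := T.exists_preimage_norm_le hT
  refine ⟨C⁻¹, inv_pos.mpr hC, fun y => ?_⟩
  obtain ⟨x, rfl, hx⟩ := hpre y
  have hsq : ‖T x‖ ^ 2 ≤ C * ‖T x‖ * ‖adjoint T (T x)‖ :=
    calc ‖T x‖ ^ 2 = RCLike.re ⟪x, adjoint T (T x)⟫_𝕜 := by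
          rw [adjoint_inner_right, inner_self_eq_norm_sq]
      _ ≤ ‖x‖ * ‖adjoint T (T x)‖ := re_inner_le_norm _ _
      _ ≤ C * ‖T x‖ * ‖adjoint T (T x)‖ := by gcongr
  rcases (norm_nonneg (T x)).eq_or_lt with hzero | hpos
  · simp [← hzero]
  · rw [inv_mul_le_iff₀ hC]
    nlinarith

theorem norm_adjoint_apply_sq (T : E →L[𝕜] F) (y : F) :
    ‖adjoint T y‖ ^ 2 = RCLike.re ⟪(T ∘L adjoint T) y, y⟫_𝕜 := by
  rw [apply_norm_sq_eq_inner_adjoint_left, adjoint_adjoint]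

theorem surjective_of_mul_norm_le_norm_adjoint {T : E →L[𝕜] F} {c : ℝ} (hc : 0 < c)
    (h : ∀ y, c * ‖y‖ ≤ ‖adjoint T y‖) : Function.Surjective T := by
  set S := T ∘L adjoint T
  have hS_bound : ∀ y, ‖y‖ ≤ (c ^ 2)⁻¹ * ‖S y‖ := by
    intro y
    rcases (norm_nonneg y).eq_or_lt with hzero | hpos
    · rw [← hzero]; positivity
    have hsq : (c * ‖y‖) ^ 2 ≤ ‖S y‖ * ‖y‖ :=
      calc (c * ‖y‖) ^ 2 ≤ ‖adjoint T y‖ ^ 2 := by gcongr; exact h y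
        _ = RCLike.re ⟪S y, y⟫_𝕜 := norm_adjoint_apply_sq T y
        _ ≤ ‖S y‖ * ‖y‖ := re_inner_le_norm _ _
    rw [le_inv_mul_iff₀ (by positivity)]
    nlinarith
  have hker : (adjoint T).ker = ⊥ := LinearMap.ker_eq_bot'.mpr fun y hy => by
    have : c * ‖y‖ ≤ c * 0 := by simpa [show adjoint T y = 0 from hy] using h y
    exact norm_le_zero_iff.mp (le_of_mul_le_mul_left this hc)
  have hdense : S.range.topologicalClosure = ⊤ := by
    rw [Submodule.topologicalClosure_eq_top_iff, orthogonal_range, adjoint_comp, adjoint_adjoint,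
      ker_self_comp_adjoint, hker]
  have hS : Function.Bijective S := (bijective_iff_dense_range_and_antilipschitz S).mpr
    ⟨hdense, _, antilipschitz_of_bound (K := ⟨(c ^ 2)⁻¹, by positivity⟩) S hS_bound⟩
  exact Function.Surjective.of_comp (g := adjoint T) hS.surjective

theorem surjective_iff_exists_mul_norm_le_norm_adjoint {T : E →L[𝕜] F} :
    Function.Surjective T ↔ ∃ c, 0 < c ∧ ∀ y, c * ‖y‖ ≤ ‖adjoint T y‖ :=
  ⟨exists_mul_norm_le_norm_adjoint_of_surjective,
    fun ⟨_, hc, h⟩ => surjective_of_mul_norm_le_norm_adjoint hc h⟩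

end ContinuousLinearMap

theorem exists_frame_bounds_iff_exists_mul_norm_le {𝕜 E F I : Type*}
    [NontriviallyNormedField 𝕜]
    [SeminormedAddCommGroup E] [NormedSpace 𝕜 E] [SeminormedAddCommGroup F] [NormedSpace 𝕜 F]
    (A : E →L[𝕜] F) (a : E → I → ℝ) (ha : ∀ x, HasSum (a x) (‖A x‖ ^ 2)) :
    (∃ C D : ℝ, 0 < C ∧
        ∀ x, Summable (a x) ∧ C * ‖x‖ ^ 2 ≤ ∑' i, a x i ∧ ∑' i, a x i ≤ D * ‖x‖ ^ 2) ↔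
      ∃ c : ℝ, 0 < c ∧ ∀ x, c * ‖x‖ ≤ ‖A x‖ := by
  simp only [fun x => (ha x).tsum_eq]
  constructor
  · rintro ⟨C, _, hC, hbounds⟩
    refine ⟨√C, Real.sqrt_pos.mpr hC, fun x => ?_⟩
    refine (pow_le_pow_iff_left₀ (by positivity) (norm_nonneg _) two_ne_zero).mp ?_
    rw [mul_pow, Real.sq_sqrt hC.le]
    exact (hbounds x).2.1
  · rintro ⟨c, hc, hbelow⟩
    refine ⟨c ^ 2, ‖A‖ ^ 2, by positivity, fun x => ⟨(ha x).summable, ?_, ?_⟩⟩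
    · rw [← mul_pow]
      gcongr
      exact hbelow x
    · rw [← mul_pow]
      gcongr
      exact A.le_opNorm x

section SynthesisOperator

variable {H : Type*} [NormedAddCommGroup H] [InnerProductSpace ℝ H]
  {I : Type*} {W : I → Submodule ℝ H} {v : I → ℝ} {T : lp (fun i => ↥(W i)) 2 →L[ℝ] H}

theorem synthesis_apply_single
    (hT : ∀ g : lp (fun i => ↥(W i)) 2, HasSum (fun i => v i • (g i : H)) (T g))
    [DecidableEq I] (i : I) (w : W i) : T (lp.single 2 i w) = v i • (w : H) := by
  refine (hT _).unique ?_
  convert hasSum_single i fun j hj => ?_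
  · rw [lp.single_apply_self]
  · rw [lp.single_apply_ne _ _ _ hj, ZeroMemClass.coe_zero, smul_zero]

variable [CompleteSpace H] [∀ i, CompleteSpace (W i)]

theorem adjoint_synthesis_apply
    (hT : ∀ g : lp (fun i => ↥(W i)) 2, HasSum (fun i => v i • (g i : H)) (T g))
    (f : H) (i : I) :
    ContinuousLinearMap.adjoint T f i = v i • Submodule.orthogonalProjectionOnto (W i) f := by
  classical
  refine ext_inner_left ℝ fun w => ?_
  rw [← lp.inner_single_left (𝕜 := ℝ) i w (ContinuousLinearMap.adjoint T f),
    ContinuousLinearMap.adjoint_inner_right, synthesis_apply_single hT, real_inner_smul_left,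
    inner_smul_right, Submodule.inner_orthogonalProjectionOnto_eq_of_mem_left]

theorem hasSum_norm_sq_adjoint_synthesis
    (hT : ∀ g : lp (fun i => ↥(W i)) 2, HasSum (fun i => v i • (g i : H)) (T g))
    (f : H) :
    HasSum (fun i => v i ^ 2 * ‖(Submodule.orthogonalProjectionOnto (W i) f : H)‖ ^ 2)
      (‖ContinuousLinearMap.adjoint T f‖ ^ 2) := by
  have h := lp.hasSum_inner (𝕜 := ℝ) (ContinuousLinearMap.adjoint T f)
    (ContinuousLinearMap.adjoint T f)
  simp only [real_inner_self_eq_norm_sq, adjoint_synthesis_apply hT, norm_smul, Real.norm_eq_abs,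
    mul_pow, sq_abs] at h
  exact h

end SynthesisOperator

theorem fusionFrame_iff_synthesis_surjective_iff_analysis_boundedBelow_general
    {H : Type*} [NormedAddCommGroup H] [InnerProductSpace ℝ H] [CompleteSpace H]
    {I : Type*} (W : I → Submodule ℝ H) [∀ i, CompleteSpace (W i)]
    (v : I → ℝ)
    (T : lp (fun i => ↥(W i)) 2 →L[ℝ] H)
    (hT : ∀ g : lp (fun i => ↥(W i)) 2, HasSum (fun i => v i • (g i : H)) (T g)) :
    ((∃ C D : ℝ, 0 < C ∧
        ∀ f : H, Summable (fun i => v i ^ 2 * ‖(Submodule.orthogonalProjectionOnto (W i) f : H)‖ ^ 2) ∧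
          C * ‖f‖ ^ 2 ≤ ∑' i, v i ^ 2 * ‖(Submodule.orthogonalProjectionOnto (W i) f : H)‖ ^ 2 ∧
          ∑' i, v i ^ 2 * ‖(Submodule.orthogonalProjectionOnto (W i) f : H)‖ ^ 2 ≤ D * ‖f‖ ^ 2) ↔
      Function.Surjective T) ∧
    (Function.Surjective T ↔
      ∃ c : ℝ, 0 < c ∧ ∀ f : H, c * ‖f‖ ≤ ‖ContinuousLinearMap.adjoint T f‖) := by
  have hframe := exists_frame_bounds_iff_exists_mul_norm_le (ContinuousLinearMap.adjoint T) _
    (hasSum_norm_sq_adjoint_synthesis hT)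
  have hsurj := ContinuousLinearMap.surjective_iff_exists_mul_norm_le_norm_adjoint (T := T)
  exact ⟨hframe.trans hsurj.symm, hsurj⟩

/-- For a family of closed subspaces with weights, the following are
equivalent: being a frame of subspaces; surjectivity of the (bounded) synthesis
operator; and boundedness below of the analysis operator. -/
theorem fusionFrame_iff_synthesis_surjective_iff_analysis_boundedBelow
    {H : Type*} [NormedAddCommGroup H] [InnerProductSpace ℝ H] [CompleteSpace H]
    {I : Type*} (W : I → Submodule ℝ H) [∀ i, CompleteSpace (W i)]
    (v : I → ℝ) (hv : ∀ i, 0 < v i)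
    (T : lp (fun i => ↥(W i)) 2 →L[ℝ] H)
    (hT : ∀ g : lp (fun i => ↥(W i)) 2, HasSum (fun i => v i • (g i : H)) (T g)) :
    ((∃ C D : ℝ, 0 < C ∧
        ∀ f : H, Summable (fun i => v i ^ 2 * ‖(Submodule.orthogonalProjectionOnto (W i) f : H)‖ ^ 2) ∧
          C * ‖f‖ ^ 2 ≤ ∑' i, v i ^ 2 * ‖(Submodule.orthogonalProjectionOnto (W i) f : H)‖ ^ 2 ∧
          ∑' i, v i ^ 2 * ‖(Submodule.orthogonalProjectionOnto (W i) f : H)‖ ^ 2 ≤ D * ‖f‖ ^ 2) ↔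
      Function.Surjective T) ∧
    (Function.Surjective T ↔
      ∃ c : ℝ, 0 < c ∧ ∀ f : H, c * ‖f‖ ≤ ‖ContinuousLinearMap.adjoint T f‖) :=
  fusionFrame_iff_synthesis_surjective_iff_analysis_boundedBelow_general W v T hT
end

section
/- Let {W_i}_{i∈I} be a frame of subspaces with respect to {v_i} for H with bounds C and D. The frame operator S_{W,v}(f) = Σ_i v_i² π_{W_i}(f) is a positive, self-adjoint, invertible bounded operator on H satisfying C·I ≤ S_{W,v} ≤ D·I, and every f ∈ H satisfies the reconstruction formula f = Σ_i v_i² S_{W,v}^{-1} π_{W_i}(f). -/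
/-!
Pairing the series `S f = Σ v_i² π_{W_i} f` with `f` gives `⟪S f, f⟫ = Σ v_i² ‖π_{W_i} f‖²`, so the
frame inequalities are exactly `C·I ≤ S ≤ D·I`. As a pointwise sum of self-adjoint operators `S`
is self-adjoint, and the lower bound makes it coercive, hence invertible by Lax–Milgram. Applying
the bounded operator `S⁻¹` termwise to the series for `S f` gives the reconstruction formula.
-/

open scoped InnerProductSpace

section RCLike

variable {𝕜 E ι : Type*} [RCLike 𝕜] [NormedAddCommGroup E] [InnerProductSpace 𝕜 E]

theorem HasSum.inner_left {f : ι → E} {a : E} (hf : HasSum f a) (x : E) :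
    HasSum (fun i => ⟪x, f i⟫_𝕜) ⟪x, a⟫_𝕜 :=
  (innerSL 𝕜 x).hasSum hf

theorem HasSum.inner_right {f : ι → E} {a : E} (hf : HasSum f a) (y : E) :
    HasSum (fun i => ⟪f i, y⟫_𝕜) ⟪a, y⟫_𝕜 :=
  (innerSLFlip 𝕜 y).hasSum hf

theorem isSelfAdjoint_of_hasSum_apply [CompleteSpace E] {T : ι → E →L[𝕜] E} {S : E →L[𝕜] E}
    (hT : ∀ i, IsSelfAdjoint (T i)) (hS : ∀ x, HasSum (fun i => T i x) (S x)) :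
    IsSelfAdjoint S := by
  rw [ContinuousLinearMap.isSelfAdjoint_iff_isSymmetric]
  intro x y
  refine ((hS x).inner_right (𝕜 := 𝕜) y).unique ?_
  convert (hS y).inner_left (𝕜 := 𝕜) x using 2 with i
  · exact (hT i).isSymmetric x y
  · rfl

end RCLike

section Real

variable {H : Type*} [NormedAddCommGroup H] [InnerProductSpace ℝ H]

theorem hasSum_inner_self_of_hasSum_smul_starProjection {ι : Type*} {W : ι → Submodule ℝ H}
    [∀ i, (W i).HasOrthogonalProjection] {c : ι → ℝ} {f y : H}
    (h : HasSum (fun i => c i • (W i).starProjection f) y) :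
    HasSum (fun i => c i * ‖((W i).orthogonalProjectionOnto f : H)‖ ^ 2) ⟪y, f⟫_ℝ := by
  have hproj (i : ι) :
      ⟪(W i).starProjection f, f⟫_ℝ = ‖((W i).orthogonalProjectionOnto f : H)‖ ^ 2 := by
    simpa using (W i).re_inner_starProjection_eq_normSq f
  simpa only [real_inner_smul_left, hproj] using h.inner_right (𝕜 := ℝ) f

theorem ContinuousLinearMap.exists_inverse_of_coercive [CompleteSpace H] (S : H →L[ℝ] H)
    {C : ℝ} (hC : 0 < C) (hS : ∀ f, C * ‖f‖ ^ 2 ≤ ⟪S f, f⟫_ℝ) :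
    ∃ S' : H →L[ℝ] H, S'.comp S = .id ℝ H ∧ S.comp S' = .id ℝ H := by
  have hcoer : IsCoercive ((innerSL ℝ).comp S) :=
    ⟨C, hC, fun f => by simpa [sq, mul_assoc] using hS f⟩
  set E := hcoer.continuousLinearEquivOfBilin
  have hE : (E : H →L[ℝ] H) = S := by
    ext f
    exact (hcoer.unique_continuousLinearEquivOfBilin fun _ => rfl).symm
  exact ⟨E.symm, hE ▸ E.coe_symm_comp_coe, hE ▸ E.coe_comp_coe_symm⟩

end Real

theorem fusionFrame_frameOperator_properties_general
    {H : Type*} [NormedAddCommGroup H] [InnerProductSpace ℝ H] [CompleteSpace H]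
    {I : Type*} (W : I → Submodule ℝ H) [∀ i, CompleteSpace (W i)]
    (v : I → ℝ) (C D : ℝ) (hC : 0 < C)
    (hframe : ∀ f : H,
      Summable (fun i => v i ^ 2 * ‖((W i).orthogonalProjectionOnto f : H)‖ ^ 2) ∧
      C * ‖f‖ ^ 2 ≤ ∑' i, v i ^ 2 * ‖((W i).orthogonalProjectionOnto f : H)‖ ^ 2 ∧
      ∑' i, v i ^ 2 * ‖((W i).orthogonalProjectionOnto f : H)‖ ^ 2 ≤ D * ‖f‖ ^ 2)
    (S : H →L[ℝ] H)
    (hS : ∀ f : H, HasSum (fun i => v i ^ 2 • ((W i).orthogonalProjectionOnto f : H)) (S f)) :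
    (∀ f : H, 0 ≤ (inner ℝ (S f) f : ℝ)) ∧
    IsSelfAdjoint S ∧
    (∀ f : H, C * ‖f‖ ^ 2 ≤ (inner ℝ (S f) f : ℝ) ∧ (inner ℝ (S f) f : ℝ) ≤ D * ‖f‖ ^ 2) ∧
    ∃ S' : H →L[ℝ] H, S'.comp S = ContinuousLinearMap.id ℝ H ∧
      S.comp S' = ContinuousLinearMap.id ℝ H ∧
      ∀ f : H, HasSum (fun i => v i ^ 2 • S' ((W i).orthogonalProjectionOnto f : H)) f := by
  have hbounds : ∀ f, C * ‖f‖ ^ 2 ≤ ⟪S f, f⟫_ℝ ∧ ⟪S f, f⟫_ℝ ≤ D * ‖f‖ ^ 2 := fun f => by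
    rw [← (hasSum_inner_self_of_hasSum_smul_starProjection (hS f)).tsum_eq]
    exact (hframe f).2
  have hsa : IsSelfAdjoint S :=
    isSelfAdjoint_of_hasSum_apply (T := fun i => v i ^ 2 • (W i).starProjection)
      (fun i => .smul (.all _) (isSelfAdjoint_starProjection (W i))) hS
  obtain ⟨S', hS'S, hSS'⟩ := S.exists_inverse_of_coercive hC fun f => (hbounds f).1
  refine ⟨fun f => le_trans (by positivity) (hbounds f).1, hsa, hbounds, S', hS'S, hSS',
    fun f => ?_⟩
  simpa only [map_smul, ← ContinuousLinearMap.comp_apply, hS'S, ContinuousLinearMap.id_apply]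
    using S'.hasSum (hS f)

/-- The frame operator `S f = Σ v_i² π_{W_i} f` of a frame of subspaces
with bounds `C, D` is positive, self-adjoint, invertible, satisfies `C·I ≤ S ≤ D·I`,
and yields the reconstruction formula `f = Σ v_i² S⁻¹ π_{W_i} f`. -/
theorem fusionFrame_frameOperator_properties
    {H : Type*} [NormedAddCommGroup H] [InnerProductSpace ℝ H] [CompleteSpace H]
    {I : Type*} (W : I → Submodule ℝ H) [∀ i, CompleteSpace (W i)]
    (v : I → ℝ) (hv : ∀ i, 0 < v i) (C D : ℝ) (hC : 0 < C) (hCD : C ≤ D)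
    (hframe : ∀ f : H,
      Summable (fun i => v i ^ 2 * ‖((W i).orthogonalProjectionOnto f : H)‖ ^ 2) ∧
      C * ‖f‖ ^ 2 ≤ ∑' i, v i ^ 2 * ‖((W i).orthogonalProjectionOnto f : H)‖ ^ 2 ∧
      ∑' i, v i ^ 2 * ‖((W i).orthogonalProjectionOnto f : H)‖ ^ 2 ≤ D * ‖f‖ ^ 2)
    (S : H →L[ℝ] H)
    (hS : ∀ f : H, HasSum (fun i => v i ^ 2 • ((W i).orthogonalProjectionOnto f : H)) (S f)) :
    (∀ f : H, 0 ≤ (inner ℝ (S f) f : ℝ)) ∧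
    IsSelfAdjoint S ∧
    (∀ f : H, C * ‖f‖ ^ 2 ≤ (inner ℝ (S f) f : ℝ) ∧ (inner ℝ (S f) f : ℝ) ≤ D * ‖f‖ ^ 2) ∧
    ∃ S' : H →L[ℝ] H, S'.comp S = ContinuousLinearMap.id ℝ H ∧
      S.comp S' = ContinuousLinearMap.id ℝ H ∧
      ∀ f : H, HasSum (fun i => v i ^ 2 • S' ((W i).orthogonalProjectionOnto f : H)) f :=
  fusionFrame_frameOperator_properties_general W v C D hC hframe S hS
end

section
/- Let {W_i}_{i∈I} be a frame of subspaces with respect to {v_i} for H, and let T : H → H be a bounded invertible operator. Then {T W_i}_{i∈I} is also a frame of subspaces with respect to {v_i} for H; if {W_i} has bounds C, D, then {T W_i} has bounds C/(‖T‖²‖T^{-1}‖²) and D‖T‖²‖T^{-1}‖². -/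
/-!
Put `g = T* f`. Since `(T V)ᗮ` is the preimage of `Vᗮ` under `T*`, and `‖π_U f‖ ≤ ‖u‖` whenever
`f - u ⊥ U`, the projections of `f` onto `T Wᵢ` and of `g` onto `Wᵢ` are comparable:
`‖π_{T Wᵢ} f‖ ≤ ‖T⁻¹‖ ‖π_{Wᵢ} g‖` (take `u = (T⁻¹)* π_{Wᵢ} g`) and
`‖π_{Wᵢ} g‖ ≤ ‖T‖ ‖π_{T Wᵢ} f‖` (take `u = T* π_{T Wᵢ} f`). Summing these against the frame
inequalities for `g`, together with `‖g‖ ≤ ‖T‖ ‖f‖` and `‖f‖ ≤ ‖T⁻¹‖ ‖g‖`, gives the bounds.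
-/

open scoped InnerProductSpace

open ContinuousLinearMap Submodule

lemma summable_and_tsum_le_mul_tsum {ι : Type*} {a b : ι → ℝ} {c : ℝ} (ha : ∀ i, 0 ≤ a i)
    (hab : ∀ i, a i ≤ c * b i) (hb : Summable b) :
    Summable a ∧ ∑' i, a i ≤ c * ∑' i, b i := by
  have ha_sum : Summable a := Summable.of_nonneg_of_le ha hab (hb.mul_left c)
  refine ⟨ha_sum, ?_⟩
  rw [← tsum_mul_left]
  exact ha_sum.tsum_le_tsum hab (hb.mul_left c)

lemma mul_sq_le_sq_mul_mul_sq {w a b c : ℝ} (ha : 0 ≤ a) (h : a ≤ c * b) :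
    w ^ 2 * a ^ 2 ≤ c ^ 2 * (w ^ 2 * b ^ 2) :=
  calc w ^ 2 * a ^ 2 ≤ w ^ 2 * (c * b) ^ 2 := by gcongr
    _ = c ^ 2 * (w ^ 2 * b ^ 2) := by ring

lemma Submodule.norm_orthogonalProjectionOnto_le_of_sub_mem_orthogonal {𝕜 E : Type*}
    [RCLike 𝕜] [NormedAddCommGroup E] [InnerProductSpace 𝕜 E] (U : Submodule 𝕜 E)
    [U.HasOrthogonalProjection] {f u : E} (h : f - u ∈ Uᗮ) :
    ‖(U.orthogonalProjectionOnto f : E)‖ ≤ ‖u‖ := by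
  have hfu : U.orthogonalProjectionOnto f = U.orthogonalProjectionOnto u := by
    rw [← sub_eq_zero, ← map_sub, orthogonalProjectionOnto_apply_of_mem_orthogonal h]
  rw [hfu]
  exact norm_orthogonalProjectionOnto_apply_le U u

section

variable {𝕜 E F : Type*} [RCLike 𝕜]
  [NormedAddCommGroup E] [InnerProductSpace 𝕜 E] [CompleteSpace E]
  [NormedAddCommGroup F] [InnerProductSpace 𝕜 F] [CompleteSpace F]

lemma Submodule.mem_orthogonal_map_iff_adjoint_mem (T : E →L[𝕜] F) (V : Submodule 𝕜 E)
    (y : F) : y ∈ (V.map (T : E →ₗ[𝕜] F))ᗮ ↔ adjoint T y ∈ Vᗮ := by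
  simp only [mem_orthogonal, mem_map, forall_exists_index, and_imp, forall_apply_eq_imp_iff₂,
    adjoint_inner_right, coe_coe]

lemma ContinuousLinearMap.norm_adjoint_apply_le (T : E →L[𝕜] F) (y : F) :
    ‖adjoint T y‖ ≤ ‖T‖ * ‖y‖ := by
  simpa only [LinearIsometryEquiv.norm_map] using (adjoint T).le_opNorm y

lemma ContinuousLinearEquiv.adjoint_symm_adjoint_apply (T : E ≃L[𝕜] F) (y : F) :
    adjoint (T.symm : F →L[𝕜] E) (adjoint (T : E →L[𝕜] F) y) = y := by
  rw [← comp_apply, ← adjoint_comp, T.coe_comp_coe_symm, adjoint_id, id_apply]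

lemma ContinuousLinearEquiv.adjoint_adjoint_symm_apply (T : E ≃L[𝕜] F) (x : E) :
    adjoint (T : E →L[𝕜] F) (adjoint (T.symm : F →L[𝕜] E) x) = x := by
  rw [← comp_apply, ← adjoint_comp, T.coe_symm_comp_coe, adjoint_id, id_apply]

lemma ContinuousLinearEquiv.norm_le_norm_symm_mul_norm_adjoint_apply (T : E ≃L[𝕜] F) (y : F) :
    ‖y‖ ≤ ‖(T.symm : F →L[𝕜] E)‖ * ‖adjoint (T : E →L[𝕜] F) y‖ :=
  calc ‖y‖ = ‖adjoint (T.symm : F →L[𝕜] E) (adjoint (T : E →L[𝕜] F) y)‖ := by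
        rw [T.adjoint_symm_adjoint_apply]
    _ ≤ _ := norm_adjoint_apply_le _ _

lemma Submodule.norm_orthogonalProjectionOnto_adjoint_le (T : E →L[𝕜] F) (V : Submodule 𝕜 E)
    [V.HasOrthogonalProjection] [(V.map (T : E →ₗ[𝕜] F)).HasOrthogonalProjection] (f : F) :
    ‖(V.orthogonalProjectionOnto (adjoint T f) : E)‖ ≤
      ‖T‖ * ‖((V.map (T : E →ₗ[𝕜] F)).orthogonalProjectionOnto f : F)‖ :=
  calc ‖(V.orthogonalProjectionOnto (adjoint T f) : E)‖
      ≤ ‖adjoint T ((V.map (T : E →ₗ[𝕜] F)).orthogonalProjectionOnto f)‖ := by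
        refine V.norm_orthogonalProjectionOnto_le_of_sub_mem_orthogonal ?_
        rw [← map_sub, ← mem_orthogonal_map_iff_adjoint_mem]
        exact sub_starProjection_mem_orthogonal f
    _ ≤ _ := T.norm_adjoint_apply_le _

lemma Submodule.norm_orthogonalProjectionOnto_map_le (T : E ≃L[𝕜] F) (V : Submodule 𝕜 E)
    [V.HasOrthogonalProjection] [(V.map ((T : E →L[𝕜] F) : E →ₗ[𝕜] F)).HasOrthogonalProjection]
    (f : F) :
    ‖((V.map ((T : E →L[𝕜] F) : E →ₗ[𝕜] F)).orthogonalProjectionOnto f : F)‖ ≤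
      ‖(T.symm : F →L[𝕜] E)‖ *
        ‖(V.orthogonalProjectionOnto (adjoint (T : E →L[𝕜] F) f) : E)‖ := by
  set g := adjoint (T : E →L[𝕜] F) f
  calc _ ≤ ‖adjoint (T.symm : F →L[𝕜] E) (V.orthogonalProjectionOnto g)‖ := by
        refine norm_orthogonalProjectionOnto_le_of_sub_mem_orthogonal _ ?_
        rw [mem_orthogonal_map_iff_adjoint_mem, map_sub, T.adjoint_adjoint_symm_apply]
        exact sub_starProjection_mem_orthogonal g
    _ ≤ _ := norm_adjoint_apply_le _ _

end

theorem fusionFrame_map_invertible_general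
    {H : Type*} [NormedAddCommGroup H] [InnerProductSpace ℝ H] [CompleteSpace H]
    {I : Type*} (W : I → Submodule ℝ H) [∀ i, CompleteSpace (W i)]
    (v : I → ℝ) (C D : ℝ) (hC : 0 < C) (hCD : C ≤ D)
    (hframe : ∀ f : H,
      Summable (fun i => v i ^ 2 * ‖(Submodule.orthogonalProjectionOnto (W i) f : H)‖ ^ 2) ∧
      C * ‖f‖ ^ 2 ≤ ∑' i, v i ^ 2 * ‖(Submodule.orthogonalProjectionOnto (W i) f : H)‖ ^ 2 ∧
      ∑' i, v i ^ 2 * ‖(Submodule.orthogonalProjectionOnto (W i) f : H)‖ ^ 2 ≤ D * ‖f‖ ^ 2)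
    (T : H ≃L[ℝ] H)
    [∀ i, CompleteSpace ↥((W i).map ((T : H →L[ℝ] H) : H →ₗ[ℝ] H))] :
    ∀ f : H,
      Summable (fun i =>
        v i ^ 2 * ‖(Submodule.orthogonalProjectionOnto ((W i).map ((T : H →L[ℝ] H) : H →ₗ[ℝ] H)) f : H)‖ ^ 2) ∧
      (C / (‖(T : H →L[ℝ] H)‖ ^ 2 * ‖(T.symm : H →L[ℝ] H)‖ ^ 2)) * ‖f‖ ^ 2 ≤
        ∑' i, v i ^ 2 * ‖(Submodule.orthogonalProjectionOnto ((W i).map ((T : H →L[ℝ] H) : H →ₗ[ℝ] H)) f : H)‖ ^ 2 ∧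
      ∑' i, v i ^ 2 * ‖(Submodule.orthogonalProjectionOnto ((W i).map ((T : H →L[ℝ] H) : H →ₗ[ℝ] H)) f : H)‖ ^ 2 ≤
        (D * (‖(T : H →L[ℝ] H)‖ ^ 2 * ‖(T.symm : H →L[ℝ] H)‖ ^ 2)) * ‖f‖ ^ 2 := by
  intro f
  set g := adjoint (T : H →L[ℝ] H) f
  set k := ‖(T : H →L[ℝ] H)‖
  set s := ‖(T.symm : H →L[ℝ] H)‖
  obtain ⟨hsum, hlow, hupp⟩ := hframe g
  set Sg := ∑' i, v i ^ 2 * ‖((W i).orthogonalProjectionOnto g : H)‖ ^ 2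
  set Sf := ∑' i, v i ^ 2 *
    ‖((W i).map ((T : H →L[ℝ] H) : H →ₗ[ℝ] H) |>.orthogonalProjectionOnto f : H)‖ ^ 2
  obtain ⟨hS, hSf⟩ := summable_and_tsum_le_mul_tsum (fun i => by positivity)
    (fun i => mul_sq_le_sq_mul_mul_sq (norm_nonneg _)
      (norm_orthogonalProjectionOnto_map_le T (W i) f)) hsum
  have hSg : Sg ≤ k ^ 2 * Sf := (summable_and_tsum_le_mul_tsum (fun i => by positivity)
    (fun i => mul_sq_le_sq_mul_mul_sq (norm_nonneg _)
      (norm_orthogonalProjectionOnto_adjoint_le _ (W i) f)) hS).2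
  have hgf : ‖g‖ ≤ k * ‖f‖ := norm_adjoint_apply_le _ _
  have hfg : ‖f‖ ≤ s * ‖g‖ := T.norm_le_norm_symm_mul_norm_adjoint_apply f
  have hD : 0 ≤ D := hC.le.trans hCD
  refine ⟨hS, ?_, ?_⟩
  · -- no case split on `k * s = 0` (i.e. `H = 0`): there `C / 0 = 0` and the bound is trivial
    rw [div_mul_eq_mul_div]
    refine div_le_of_le_mul₀ (by positivity) (tsum_nonneg fun i => by positivity) ?_
    calc C * ‖f‖ ^ 2 ≤ C * (s * ‖g‖) ^ 2 := by gcongr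
      _ = s ^ 2 * (C * ‖g‖ ^ 2) := by ring
      _ ≤ s ^ 2 * (k ^ 2 * Sf) := by gcongr s ^ 2 * ?_; exact hlow.trans hSg
      _ = Sf * (k ^ 2 * s ^ 2) := by ring
  · calc Sf ≤ s ^ 2 * (D * ‖g‖ ^ 2) := hSf.trans (by gcongr)
      _ ≤ s ^ 2 * (D * (k * ‖f‖) ^ 2) := by gcongr
      _ = D * (k ^ 2 * s ^ 2) * ‖f‖ ^ 2 := by ring

/-- The image of a frame of subspaces under a bounded invertible
operator `T` is again a frame of subspaces, with bounds `C/(‖T‖²‖T⁻¹‖²)` and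
`D‖T‖²‖T⁻¹‖²`. -/
theorem fusionFrame_map_invertible
    {H : Type*} [NormedAddCommGroup H] [InnerProductSpace ℝ H] [CompleteSpace H]
    {I : Type*} (W : I → Submodule ℝ H) [∀ i, CompleteSpace (W i)]
    (v : I → ℝ) (hv : ∀ i, 0 < v i) (C D : ℝ) (hC : 0 < C) (hCD : C ≤ D)
    (hframe : ∀ f : H,
      Summable (fun i => v i ^ 2 * ‖(Submodule.orthogonalProjectionOnto (W i) f : H)‖ ^ 2) ∧
      C * ‖f‖ ^ 2 ≤ ∑' i, v i ^ 2 * ‖(Submodule.orthogonalProjectionOnto (W i) f : H)‖ ^ 2 ∧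
      ∑' i, v i ^ 2 * ‖(Submodule.orthogonalProjectionOnto (W i) f : H)‖ ^ 2 ≤ D * ‖f‖ ^ 2)
    (T : H ≃L[ℝ] H)
    [∀ i, CompleteSpace ↥((W i).map ((T : H →L[ℝ] H) : H →ₗ[ℝ] H))] :
    ∀ f : H,
      Summable (fun i =>
        v i ^ 2 * ‖(Submodule.orthogonalProjectionOnto ((W i).map ((T : H →L[ℝ] H) : H →ₗ[ℝ] H)) f : H)‖ ^ 2) ∧
      (C / (‖(T : H →L[ℝ] H)‖ ^ 2 * ‖(T.symm : H →L[ℝ] H)‖ ^ 2)) * ‖f‖ ^ 2 ≤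
        ∑' i, v i ^ 2 * ‖(Submodule.orthogonalProjectionOnto ((W i).map ((T : H →L[ℝ] H) : H →ₗ[ℝ] H)) f : H)‖ ^ 2 ∧
      ∑' i, v i ^ 2 * ‖(Submodule.orthogonalProjectionOnto ((W i).map ((T : H →L[ℝ] H) : H →ₗ[ℝ] H)) f : H)‖ ^ 2 ≤
        (D * (‖(T : H →L[ℝ] H)‖ ^ 2 * ‖(T.symm : H →L[ℝ] H)‖ ^ 2)) * ‖f‖ ^ 2 :=
  fusionFrame_map_invertible_general W v C D hC hCD hframe T
end

section
/- A family of closed subspaces {W_i}_{i∈I} of H is an orthonormal basis of subspaces (i.e., H is the orthogonal direct sum ⊕_i W_i) if and only if it is a 1-uniform Parseval frame of subspaces, i.e., Σ_i ‖π_{W_i}(f)‖² = ‖f‖² for all f ∈ H. -/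
/-!
If the `W i` are pairwise orthogonal with dense span, `H` is their Hilbert sum, so every `f` is
the unconditional sum of its projections `π i f`; pairing this sum with `f` gives
`∑ ‖π i f‖² = ‖f‖²`. Conversely, for `x ∈ W i` and `j ≠ i` the identity yields
`‖x‖² ≥ ‖π i x‖² + ‖π j x‖² = ‖x‖² + ‖π j x‖²`, so `π j x = 0` and `W i ⟂ W j`; and a vector
orthogonal to every `W i` has all its projections zero, hence norm zero.
-/

open Submodule

section

variable {𝕜 E ι : Type*} [RCLike 𝕜] [NormedAddCommGroup E] [InnerProductSpace 𝕜 E]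
  {W : ι → Submodule 𝕜 E}

theorem OrthogonalFamily.orthogonalProjectionOnto_eq_of_hasSum
    [∀ i, (W i).HasOrthogonalProjection]
    (hW : OrthogonalFamily 𝕜 (fun i => W i) fun i => (W i).subtypeₗᵢ)
    {x : ∀ i, W i} {f : E} (hx : HasSum (fun i => (x i : E)) f) (j : ι) :
    (W j).orthogonalProjectionOnto f = x j := by
  have hoff : ∀ i ≠ j, (W j).orthogonalProjectionOnto (x i) = 0 := fun i hij =>
    orthogonalProjectionOnto_apply_of_mem_orthogonal (hW.isOrtho hij (x i).2)
  refine ((W j).orthogonalProjectionOnto.hasSum hx).unique ?_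
  simpa only [orthogonalProjectionOnto_mem_subspace_eq_self] using hasSum_single j hoff

theorem OrthogonalFamily.hasSum_orthogonalProjectionOnto [CompleteSpace E]
    [∀ i, CompleteSpace (W i)]
    (hW : OrthogonalFamily 𝕜 (fun i => W i) fun i => (W i).subtypeₗᵢ)
    (hdense : ⊤ ≤ (⨆ i, W i).topologicalClosure) (f : E) :
    HasSum (fun i => ((W i).orthogonalProjectionOnto f : E)) f := by
  have hS := IsHilbertSum.mkInternal W hW hdense
  have hL : HasSum (fun i => (hS.linearIsometryEquiv f i : E)) f := by
    simpa using hS.hasSum_linearIsometryEquiv_symm (hS.linearIsometryEquiv f)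
  simpa only [hW.orthogonalProjectionOnto_eq_of_hasSum hL] using hL

theorem OrthogonalFamily.hasSum_norm_sq_orthogonalProjectionOnto [CompleteSpace E]
    [∀ i, CompleteSpace (W i)]
    (hW : OrthogonalFamily 𝕜 (fun i => W i) fun i => (W i).subtypeₗᵢ)
    (hdense : ⊤ ≤ (⨆ i, W i).topologicalClosure) (f : E) :
    HasSum (fun i => ‖(W i).orthogonalProjectionOnto f‖ ^ 2) (‖f‖ ^ 2) := by
  have := RCLike.hasSum_re 𝕜 ((innerSL 𝕜 f).hasSum (hW.hasSum_orthogonalProjectionOnto hdense f))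
  simp only [innerSL_apply_apply, inner_self_eq_norm_sq] at this
  simpa only [inner_re_symm f, ← starProjection_apply, re_inner_starProjection_eq_normSq] using this

theorem Submodule.isOrtho_of_hasSum_norm_sq_orthogonalProjectionOnto
    [∀ i, (W i).HasOrthogonalProjection] {i j : ι} (hij : i ≠ j)
    (h : ∀ x ∈ W i, HasSum (fun k => ‖(W k).orthogonalProjectionOnto x‖ ^ 2) (‖x‖ ^ 2)) :
    W i ⟂ W j := by
  classical
  intro x hx
  have hpair := sum_le_hasSum {i, j} (fun _ _ => sq_nonneg _) (h x hx)
  rw [Finset.sum_pair hij, orthogonalProjectionOnto_mem_subspace_eq_self ⟨x, hx⟩] at hpair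
  have hproj : ‖(W j).orthogonalProjectionOnto x‖ ^ 2 ≤ 0 := by simpa using hpair
  exact (starProjection_apply_eq_zero_iff _).1 (by simpa using hproj)

theorem Submodule.orthogonal_iSup_eq_bot_of_hasSum_norm_sq_orthogonalProjectionOnto
    [∀ i, (W i).HasOrthogonalProjection]
    (h : ∀ x, HasSum (fun k => ‖(W k).orthogonalProjectionOnto x‖ ^ 2) (‖x‖ ^ 2)) :
    (⨆ i, W i)ᗮ = ⊥ := by
  refine (Submodule.eq_bot_iff _).2 fun x hx => ?_
  have hzero : ∀ i, (W i).orthogonalProjectionOnto x = 0 := fun i =>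
    orthogonalProjectionOnto_apply_of_mem_orthogonal (orthogonal_le (le_iSup W i) hx)
  have hnorm : ‖x‖ ^ 2 = 0 := (h x).unique (by simp [hzero])
  simpa using hnorm

end

/-- A family of closed subspaces is an orthonormal basis of subspaces
(pairwise orthogonal with dense span) iff it is a 1-uniform Parseval frame of
subspaces, i.e. `Σ_i ‖π_{W_i} f‖² = ‖f‖²` for all `f`. -/
theorem orthonormalBasisOfSubspaces_iff_oneUniform_parseval
    {H : Type*} [NormedAddCommGroup H] [InnerProductSpace ℝ H] [CompleteSpace H]
    {I : Type*} (W : I → Submodule ℝ H) [∀ i, CompleteSpace (W i)] :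
    ((∀ i j, i ≠ j → ∀ x ∈ W i, ∀ y ∈ W j, (inner ℝ x y : ℝ) = 0) ∧
      (⨆ i, W i).topologicalClosure = ⊤) ↔
    (∀ f : H, HasSum (fun i => ‖(Submodule.orthogonalProjection (W i) f : H)‖ ^ 2) (‖f‖ ^ 2)) := by
  have horth : (∀ i j, i ≠ j → ∀ x ∈ W i, ∀ y ∈ W j, (inner ℝ x y : ℝ) = 0) ↔
      OrthogonalFamily ℝ (fun i => W i) fun i => (W i).subtypeₗᵢ := by
    simp only [orthogonalFamily_iff_pairwise, Pairwise, Function.onFun, isOrtho_iff_inner_eq]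
  rw [horth]
  refine ⟨fun ⟨hW, hdense⟩ => hW.hasSum_norm_sq_orthogonalProjectionOnto hdense.ge, fun h => ?_⟩
  refine ⟨.of_pairwise fun i j hij => ?_, ?_⟩
  · exact isOrtho_of_hasSum_norm_sq_orthogonalProjectionOnto hij fun x _ => h x
  · exact topologicalClosure_eq_top_iff.2
      (orthogonal_iSup_eq_bot_of_hasSum_norm_sq_orthogonalProjectionOnto h)
end

section
/- Let {W_i}_{i∈I} be a frame of subspaces with respect to {v_i} for H with upper bound D, and suppose T_i : H → W_i are operators such that {v_i² T_i}_{i∈I} is a resolution of the identity (Σ_i v_i² T_i(f) = f for all f). Then for every subset J ⊆ I and all f ∈ H, (1/D)‖Σ_{j∈J} v_j² T_j(f)‖² ≤ Σ_{j∈J} v_j² ‖T_j(f)‖². -/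
open scoped InnerProductSpace

/-!
Put `g = ∑_{j ∈ J} v_j² T_j f`. Since `T_j f ∈ W_j`, pairing `g` with itself gives
`‖g‖² = ∑_j v_j² ⟪π_{W_j} g, T_j f⟫ ≤ (∑_j v_j² ‖π_{W_j} g‖²)^{1/2} (∑_j v_j² ‖T_j f‖²)^{1/2}`
by Cauchy–Schwarz, and the upper frame bound applied to `g` bounds the first factor by
`(D ‖g‖²)^{1/2}`; squaring and cancelling `‖g‖²` gives `‖g‖² ≤ D ∑_j v_j² ‖T_j f‖²`.
-/

lemma le_sqrt_tsum_sq_mul_sqrt_tsum_sq {ι : Type*} {u f g : ι → ℝ} {a : ℝ} (hu : HasSum u a)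
    (huf : ∀ i, u i ≤ f i * g i) (hf : Summable fun i => f i ^ 2)
    (hg : Summable fun i => g i ^ 2) :
    a ≤ √(∑' i, f i ^ 2) * √(∑' i, g i ^ 2) := by
  refine le_of_tendsto' hu fun s => ?_
  calc ∑ i ∈ s, u i ≤ ∑ i ∈ s, f i * g i := Finset.sum_le_sum fun i _ => huf i
    _ ≤ √(∑ i ∈ s, f i ^ 2) * √(∑ i ∈ s, g i ^ 2) := Real.sum_mul_le_sqrt_mul_sqrt s f g
    _ ≤ √(∑' i, f i ^ 2) * √(∑' i, g i ^ 2) := by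
      gcongr
      · exact hf.sum_le_tsum s fun i _ => sq_nonneg _
      · exact hg.sum_le_tsum s fun i _ => sq_nonneg _

lemma ENNReal.ofReal_le_tsum_ofReal {ι : Type*} {f : ι → ℝ} {a : ℝ} (hf : ∀ i, 0 ≤ f i)
    (h : Summable f → a ≤ ∑' i, f i) : ENNReal.ofReal a ≤ ∑' i, ENNReal.ofReal (f i) := by
  by_cases htop : ∑' i, ENNReal.ofReal (f i) = ⊤
  · exact htop ▸ le_top
  have hs : Summable f := by
    simpa only [ENNReal.toReal_ofReal (hf _)] using ENNReal.summable_toReal htop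
  rw [← ENNReal.ofReal_tsum_of_nonneg hf hs]
  exact ENNReal.ofReal_le_ofReal (h hs)

section

variable {E ι : Type*} [NormedAddCommGroup E] [InnerProductSpace ℝ E]

lemma Submodule.inner_le_norm_orthogonalProjectionOnto_mul_norm (K : Submodule ℝ E)
    [K.HasOrthogonalProjection] (g : E) {x : E} (hx : x ∈ K) :
    ⟪g, x⟫_ℝ ≤ ‖(K.orthogonalProjectionOnto g : E)‖ * ‖x‖ :=
  calc ⟪g, x⟫_ℝ = ⟪(K.orthogonalProjectionOnto g : E), x⟫_ℝ :=
        (K.inner_orthogonalProjectionOnto_eq_of_mem_right ⟨x, hx⟩ g).symm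
    _ ≤ _ := real_inner_le_norm _ _

variable (K : ι → Submodule ℝ E) [∀ i, (K i).HasOrthogonalProjection] {w : ι → ℝ}
  {x : ι → E} {g : E}

lemma sq_norm_sq_le_tsum_mul_tsum (hw : ∀ i, 0 ≤ w i) (hx : ∀ i, x i ∈ K i)
    (hg : HasSum (fun i => w i • x i) g)
    (hPg : Summable fun i => w i * ‖((K i).orthogonalProjectionOnto g : E)‖ ^ 2)
    (hxs : Summable fun i => w i * ‖x i‖ ^ 2) :
    (‖g‖ ^ 2) ^ 2 ≤
      (∑' i, w i * ‖((K i).orthogonalProjectionOnto g : E)‖ ^ 2) * ∑' i, w i * ‖x i‖ ^ 2 := by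
  have hpair : HasSum (fun i => w i * ⟪g, x i⟫_ℝ) (‖g‖ ^ 2) := by
    simpa only [map_smul, innerSL_apply_apply, smul_eq_mul, real_inner_self_eq_norm_sq]
      using hg.mapL (innerSL ℝ g)
  have hsq : ∀ (i : ι) (y : E), (√(w i) * ‖y‖) ^ 2 = w i * ‖y‖ ^ 2 := fun i y => by
    rw [mul_pow, Real.sq_sqrt (hw i)]
  have hterm : ∀ i, w i * ⟪g, x i⟫_ℝ ≤
      (√(w i) * ‖((K i).orthogonalProjectionOnto g : E)‖) * (√(w i) * ‖x i‖) := fun i =>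
    calc w i * ⟪g, x i⟫_ℝ ≤ w i * (‖((K i).orthogonalProjectionOnto g : E)‖ * ‖x i‖) :=
          mul_le_mul_of_nonneg_left
            ((K i).inner_le_norm_orthogonalProjectionOnto_mul_norm g (hx i)) (hw i)
      _ = _ := by rw [mul_mul_mul_comm, Real.mul_self_sqrt (hw i)]
  have hCS := le_sqrt_tsum_sq_mul_sqrt_tsum_sq hpair hterm (by simpa only [hsq] using hPg)
    (by simpa only [hsq] using hxs)
  simp only [hsq] at hCS
  calc (‖g‖ ^ 2) ^ 2 ≤ (√(∑' i, w i * ‖((K i).orthogonalProjectionOnto g : E)‖ ^ 2) *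
        √(∑' i, w i * ‖x i‖ ^ 2)) ^ 2 := pow_le_pow_left₀ (sq_nonneg _) hCS 2
    _ = _ := by
      rw [mul_pow, Real.sq_sqrt (tsum_nonneg fun i => mul_nonneg (hw i) (sq_nonneg _)),
        Real.sq_sqrt (tsum_nonneg fun i => mul_nonneg (hw i) (sq_nonneg _))]

lemma sq_norm_le_mul_tsum {D : ℝ} (hD : 0 ≤ D) (hw : ∀ i, 0 ≤ w i) (hx : ∀ i, x i ∈ K i)
    (hg : HasSum (fun i => w i • x i) g)
    (hPg : Summable fun i => w i * ‖((K i).orthogonalProjectionOnto g : E)‖ ^ 2)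
    (hxs : Summable fun i => w i * ‖x i‖ ^ 2)
    (hbound : ∑' i, w i * ‖((K i).orthogonalProjectionOnto g : E)‖ ^ 2 ≤ D * ‖g‖ ^ 2) :
    ‖g‖ ^ 2 ≤ D * ∑' i, w i * ‖x i‖ ^ 2 := by
  have hCS := sq_norm_sq_le_tsum_mul_tsum K hw hx hg hPg hxs
  have hA : 0 ≤ ∑' i, w i * ‖x i‖ ^ 2 := tsum_nonneg fun i => mul_nonneg (hw i) (sq_nonneg _)
  rcases (sq_nonneg ‖g‖).eq_or_lt with hg0 | hgpos
  · exact hg0 ▸ mul_nonneg hD hA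
  refine le_of_mul_le_mul_left ?_ hgpos
  calc ‖g‖ ^ 2 * ‖g‖ ^ 2 = (‖g‖ ^ 2) ^ 2 := (sq _).symm
    _ ≤ _ := hCS
    _ ≤ D * ‖g‖ ^ 2 * ∑' i, w i * ‖x i‖ ^ 2 := mul_le_mul_of_nonneg_right hbound hA
    _ = ‖g‖ ^ 2 * (D * ∑' i, w i * ‖x i‖ ^ 2) := by ring

end

theorem resolution_of_identity_lower_bound_general
    {H : Type*} [NormedAddCommGroup H] [InnerProductSpace ℝ H] [CompleteSpace H]
    {I : Type*} (W : I → Submodule ℝ H) [∀ i, CompleteSpace (W i)]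
    (v : I → ℝ) (C D : ℝ)
    (hframe : ∀ f : H,
      Summable (fun i => v i ^ 2 * ‖((W i).orthogonalProjectionOnto f : H)‖ ^ 2) ∧
      C * ‖f‖ ^ 2 ≤ ∑' i, v i ^ 2 * ‖((W i).orthogonalProjectionOnto f : H)‖ ^ 2 ∧
      ∑' i, v i ^ 2 * ‖((W i).orthogonalProjectionOnto f : H)‖ ^ 2 ≤ D * ‖f‖ ^ 2)
    (T : I → H →L[ℝ] H) (hTmem : ∀ i f, T i f ∈ W i)
    (hres : ∀ f : H, HasSum (fun i => v i ^ 2 • T i f) f) :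
    ∀ (J : Set I) (f : H),
      ENNReal.ofReal ((1 / D) * ‖∑' j : J, v (j : I) ^ 2 • T (j : I) f‖ ^ 2) ≤
        ∑' j : J, ENNReal.ofReal (v (j : I) ^ 2 * ‖T (j : I) f‖ ^ 2) := by
  intro J f
  rcases le_or_gt D 0 with hD | hD
  · rw [ENNReal.ofReal_of_nonpos (mul_nonpos_of_nonpos_of_nonneg (one_div_nonpos.2 hD)
      (sq_nonneg _))]
    exact zero_le
  refine ENNReal.ofReal_le_tsum_ofReal (fun j => by positivity) fun hTf => ?_
  set g := ∑' j : J, v (j : I) ^ 2 • T (j : I) f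
  obtain ⟨hPg, -, hPgD⟩ := hframe g
  rw [one_div_mul_eq_div, div_le_iff₀' hD]
  exact sq_norm_le_mul_tsum (fun j : J => W j) hD.le (fun j => sq_nonneg _) (fun j => hTmem j f)
    ((hres f).summable.subtype J).hasSum (hPg.subtype J) hTf
    ((hPg.tsum_subtype_le _ J fun i => by positivity).trans hPgD)

/-- If `{v_i² T_i}` is a resolution of the identity with `T_i` mapping
into `W_i`, and `{W_i}` has upper fusion frame bound `D`, then for every subset `J ⊆ I`,
`(1/D)‖Σ_{j∈J} v_j² T_j f‖² ≤ Σ_{j∈J} v_j² ‖T_j f‖²` (the right-hand side taken in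
`[0,∞]`). -/
theorem resolution_of_identity_lower_bound
    {H : Type*} [NormedAddCommGroup H] [InnerProductSpace ℝ H] [CompleteSpace H]
    {I : Type*} (W : I → Submodule ℝ H) [∀ i, CompleteSpace (W i)]
    (v : I → ℝ) (hv : ∀ i, 0 < v i) (C D : ℝ) (hC : 0 < C) (hCD : C ≤ D)
    (hframe : ∀ f : H,
      Summable (fun i => v i ^ 2 * ‖((W i).orthogonalProjectionOnto f : H)‖ ^ 2) ∧
      C * ‖f‖ ^ 2 ≤ ∑' i, v i ^ 2 * ‖((W i).orthogonalProjectionOnto f : H)‖ ^ 2 ∧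
      ∑' i, v i ^ 2 * ‖((W i).orthogonalProjectionOnto f : H)‖ ^ 2 ≤ D * ‖f‖ ^ 2)
    (T : I → H →L[ℝ] H) (hTmem : ∀ i f, T i f ∈ W i)
    (hres : ∀ f : H, HasSum (fun i => v i ^ 2 • T i f) f) :
    ∀ (J : Set I) (f : H),
      ENNReal.ofReal ((1 / D) * ‖∑' j : J, v (j : I) ^ 2 • T (j : I) f‖ ^ 2) ≤
        ∑' j : J, ENNReal.ofReal (v (j : I) ^ 2 * ‖T (j : I) f‖ ^ 2) :=
  resolution_of_identity_lower_bound_general W v C D hframe T hTmem hres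
end

section
/- Let {W_i}_{i∈I} be a frame of subspaces with respect to {v_i} for H with bounds C and D, with frame operator S_{W,v}. Define T_i = π_{W_i} S_{W,v}^{-1}. Then {v_i² T_i}_{i∈I} is an unconditional resolution of the identity, and (C/D²)‖f‖² ≤ Σ_i v_i² ‖T_i(f)‖² ≤ (D/C²)‖f‖² for all f ∈ H. -/
/-!
The frame operator `S = ∑ v_i² π_{W_i}` is symmetric and its quadratic form is
`⟪S f, f⟫ = ∑ v_i² ‖π_{W_i} f‖²`, so the frame inequality says `C ≤ ⟪S f, f⟫ / ‖f‖² ≤ D`.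
For a symmetric operator this gives `C ‖g‖ ≤ ‖S g‖ ≤ D ‖g‖` (the upper bound because the norm of a
symmetric operator is the supremum of its Rayleigh quotient). Expanding `S` at `g = S⁻¹ f` is the
resolution of the identity, and the frame inequality at `g`, combined with
`‖f‖ / D ≤ ‖g‖ ≤ ‖f‖ / C`, gives the two bounds.
-/

open scoped InnerProductSpace

namespace ContinuousLinearMap

variable {𝕜 E : Type*} [RCLike 𝕜] [NormedAddCommGroup E] [InnerProductSpace 𝕜 E]

open RCLike in
theorem norm_le_of_isSymmetric_of_abs_re_inner_le {T : E →L[𝕜] E} (hT : T.IsSymmetric)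
    {D : ℝ} (hD : 0 ≤ D) (h : ∀ x, |re ⟪T x, x⟫_𝕜| ≤ D * ‖x‖ ^ 2) : ‖T‖ ≤ D := by
  rw [T.norm_eq_iSup_rayleighQuotient hT]
  refine ciSup_le fun x => ?_
  rcases eq_or_ne x 0 with rfl | hx
  · simpa using hD
  rw [rayleighQuotient, reApplyInnerSelf_apply, abs_div, abs_sq,
    div_le_iff₀ (by positivity)]
  exact h x

open RCLike in
theorem mul_norm_le_norm_apply_of_le_re_inner {T : E →L[𝕜] E} {C : ℝ}
    (h : ∀ x, C * ‖x‖ ^ 2 ≤ re ⟪T x, x⟫_𝕜) (x : E) : C * ‖x‖ ≤ ‖T x‖ := by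
  rcases (norm_nonneg x).eq_or_lt with hx | hx
  · rw [← hx, mul_zero]; exact norm_nonneg _
  refine le_of_mul_le_mul_right ?_ hx
  calc C * ‖x‖ * ‖x‖ = C * ‖x‖ ^ 2 := by ring
    _ ≤ re ⟪T x, x⟫_𝕜 := h x
    _ ≤ ‖⟪T x, x⟫_𝕜‖ := re_le_norm _
    _ ≤ ‖T x‖ * ‖x‖ := norm_inner_le_norm _ _

end ContinuousLinearMap

section WeightedProjections

variable {H I : Type*} [NormedAddCommGroup H] [InnerProductSpace ℝ H]
  {W : I → Submodule ℝ H} [∀ i, (W i).HasOrthogonalProjection] {w : I → ℝ} {S : H →L[ℝ] H}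

theorem hasSum_inner_of_hasSum_smul_starProjection
    (hS : ∀ f, HasSum (fun i => w i • (W i).starProjection f) (S f)) (f g : H) :
    HasSum (fun i => w i * ⟪(W i).starProjection f, g⟫_ℝ) ⟪S f, g⟫_ℝ := by
  simpa only [innerSL_apply_apply, inner_smul_right, real_inner_comm g]
    using (innerSL ℝ g).hasSum (hS f)

theorem isSymmetric_of_hasSum_smul_starProjection
    (hS : ∀ f, HasSum (fun i => w i • (W i).starProjection f) (S f)) :
    (S : H →ₗ[ℝ] H).IsSymmetric := by
  intro f g
  have hgf := hasSum_inner_of_hasSum_smul_starProjection hS g f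
  simp only [real_inner_comm f, ← Submodule.inner_starProjection_left_eq_right] at hgf
  simpa only [ContinuousLinearMap.coe_coe, real_inner_comm f]
    using (hasSum_inner_of_hasSum_smul_starProjection hS f g).unique hgf

theorem inner_self_eq_tsum_of_hasSum_smul_starProjection
    (hS : ∀ f, HasSum (fun i => w i • (W i).starProjection f) (S f)) (f : H) :
    ⟪S f, f⟫_ℝ = ∑' i, w i * ‖(W i).starProjection f‖ ^ 2 :=
  (hasSum_inner_of_hasSum_smul_starProjection hS f f).tsum_eq.symm.trans <|
    tsum_congr fun i => congrArg (w i * ·) ((W i).re_inner_starProjection_eq_normSq f)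

end WeightedProjections

theorem fusionFrame_canonical_resolution_of_identity_general
    {H : Type*} [NormedAddCommGroup H] [InnerProductSpace ℝ H]
    {I : Type*} (W : I → Submodule ℝ H) [∀ i, CompleteSpace (W i)]
    (v : I → ℝ) (C D : ℝ) (hC : 0 < C) (hCD : C ≤ D)
    (hframe : ∀ f : H,
      Summable (fun i => v i ^ 2 * ‖(Submodule.orthogonalProjectionOnto (W i) f : H)‖ ^ 2) ∧
      C * ‖f‖ ^ 2 ≤ ∑' i, v i ^ 2 * ‖(Submodule.orthogonalProjectionOnto (W i) f : H)‖ ^ 2 ∧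
      ∑' i, v i ^ 2 * ‖(Submodule.orthogonalProjectionOnto (W i) f : H)‖ ^ 2 ≤ D * ‖f‖ ^ 2)
    (S S' : H →L[ℝ] H)
    (hS : ∀ f : H, HasSum (fun i => v i ^ 2 • (Submodule.orthogonalProjectionOnto (W i) f : H)) (S f))
    (hSS' : S.comp S' = ContinuousLinearMap.id ℝ H) :
    (∀ f : H,
      HasSum (fun i => v i ^ 2 • (Submodule.orthogonalProjectionOnto (W i) (S' f) : H)) f) ∧
    (∀ f : H,
      Summable (fun i => v i ^ 2 * ‖(Submodule.orthogonalProjectionOnto (W i) (S' f) : H)‖ ^ 2) ∧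
      (C / D ^ 2) * ‖f‖ ^ 2 ≤
        ∑' i, v i ^ 2 * ‖(Submodule.orthogonalProjectionOnto (W i) (S' f) : H)‖ ^ 2 ∧
      ∑' i, v i ^ 2 * ‖(Submodule.orthogonalProjectionOnto (W i) (S' f) : H)‖ ^ 2 ≤
        (D / C ^ 2) * ‖f‖ ^ 2) := by
  have hD : 0 < D := hC.trans_le hCD
  have hquad := inner_self_eq_tsum_of_hasSum_smul_starProjection hS
  have hS_below : ∀ g, C * ‖g‖ ≤ ‖S g‖ := S.mul_norm_le_norm_apply_of_le_re_inner fun g => by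
    rw [RCLike.re_to_real, hquad]
    exact (hframe g).2.1
  have hS_norm : ‖S‖ ≤ D := S.norm_le_of_isSymmetric_of_abs_re_inner_le
    (isSymmetric_of_hasSum_smul_starProjection hS) hD.le fun g => by
      rw [RCLike.re_to_real, hquad, abs_of_nonneg (tsum_nonneg fun i => by positivity)]
      exact (hframe g).2.2
  have hSS'_apply : ∀ f, S (S' f) = f := fun f => congr($hSS' f)
  refine ⟨fun f => by simpa only [hSS'_apply] using hS (S' f), fun f => ?_⟩
  obtain ⟨hsum, hlower, hupper⟩ := hframe (S' f)
  have hf_lower : C * ‖S' f‖ ≤ ‖f‖ := by simpa only [hSS'_apply] using hS_below (S' f)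
  have hf_upper : ‖f‖ ≤ D * ‖S' f‖ := by
    simpa only [hSS'_apply] using S.le_of_opNorm_le hS_norm (S' f)
  refine ⟨hsum, ?_, ?_⟩
  · calc C / D ^ 2 * ‖f‖ ^ 2 ≤ C / D ^ 2 * (D * ‖S' f‖) ^ 2 := by gcongr
      _ = C * ‖S' f‖ ^ 2 := by field_simp
      _ ≤ _ := hlower
  · calc _ ≤ D * ‖S' f‖ ^ 2 := hupper
      _ = D / C ^ 2 * (C * ‖S' f‖) ^ 2 := by field_simp
      _ ≤ D / C ^ 2 * ‖f‖ ^ 2 := by gcongr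

/-- For a frame of subspaces with bounds `C, D`, frame operator `S`
(with inverse `S'`), the operators `T_i = π_{W_i} S⁻¹` give an unconditional resolution
of the identity `{v_i² T_i}`, and `(C/D²)‖f‖² ≤ Σ_i v_i² ‖T_i f‖² ≤ (D/C²)‖f‖²`. -/
theorem fusionFrame_canonical_resolution_of_identity
    {H : Type*} [NormedAddCommGroup H] [InnerProductSpace ℝ H] [CompleteSpace H]
    {I : Type*} (W : I → Submodule ℝ H) [∀ i, CompleteSpace (W i)]
    (v : I → ℝ) (hv : ∀ i, 0 < v i) (C D : ℝ) (hC : 0 < C) (hCD : C ≤ D)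
    (hframe : ∀ f : H,
      Summable (fun i => v i ^ 2 * ‖(Submodule.orthogonalProjectionOnto (W i) f : H)‖ ^ 2) ∧
      C * ‖f‖ ^ 2 ≤ ∑' i, v i ^ 2 * ‖(Submodule.orthogonalProjectionOnto (W i) f : H)‖ ^ 2 ∧
      ∑' i, v i ^ 2 * ‖(Submodule.orthogonalProjectionOnto (W i) f : H)‖ ^ 2 ≤ D * ‖f‖ ^ 2)
    (S S' : H →L[ℝ] H)
    (hS : ∀ f : H, HasSum (fun i => v i ^ 2 • (Submodule.orthogonalProjectionOnto (W i) f : H)) (S f))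
    (hS'S : S'.comp S = ContinuousLinearMap.id ℝ H)
    (hSS' : S.comp S' = ContinuousLinearMap.id ℝ H) :
    (∀ f : H,
      HasSum (fun i => v i ^ 2 • (Submodule.orthogonalProjectionOnto (W i) (S' f) : H)) f) ∧
    (∀ f : H,
      Summable (fun i => v i ^ 2 * ‖(Submodule.orthogonalProjectionOnto (W i) (S' f) : H)‖ ^ 2) ∧
      (C / D ^ 2) * ‖f‖ ^ 2 ≤
        ∑' i, v i ^ 2 * ‖(Submodule.orthogonalProjectionOnto (W i) (S' f) : H)‖ ^ 2 ∧
      ∑' i, v i ^ 2 * ‖(Submodule.orthogonalProjectionOnto (W i) (S' f) : H)‖ ^ 2 ≤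
        (D / C ^ 2) * ‖f‖ ^ 2) :=
  fusionFrame_canonical_resolution_of_identity_general W v C D hC hCD hframe S S' hS hSS'
end

section
/- Let {W_i}_{i∈I} be a frame of subspaces with respect to {v_i} for H with upper bound D, and let T_i : H → W_i be bounded operators with T_i π_{W_i} = T_i such that {v_i² T_i} is a resolution of the identity. Then with E = sup_i ‖T_i‖² (assumed finite), (1/D)‖f‖² ≤ Σ_i v_i² ‖T_i(f)‖² ≤ D E ‖f‖² for all f ∈ H. -/
open scoped InnerProductSpace

/-!
Each `T i f` lies in `W i`, so `⟪T i f, f⟫ = ⟪T i f, π_{W i} f⟫` and the resolution of the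
identity gives `‖f‖² = ∑ v_i² ⟪T i f, π_{W i} f⟫`. Cauchy–Schwarz for this series and the upper
frame bound yield `‖f‖⁴ ≤ (∑ v_i² ‖T i f‖²) · D ‖f‖²`, the lower estimate. The upper estimate
follows from `‖T i f‖ = ‖T i (π_{W i} f)‖ ≤ ‖T i‖ ‖π_{W i} f‖` and the upper frame bound.
-/

theorem sq_le_tsum_mul_tsum_of_sq_le_mul {I : Type*} {r f g : I → ℝ} {s : ℝ}
    (hr : HasSum r s) (hf : ∀ i, 0 ≤ f i) (hg : ∀ i, 0 ≤ g i)
    (hf_sum : Summable f) (hg_sum : Summable g) (hrfg : ∀ i, r i ^ 2 ≤ f i * g i) :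
    s ^ 2 ≤ (∑' i, f i) * ∑' i, g i :=
  le_of_tendsto' (hr.pow 2) fun t =>
    (Finset.sum_sq_le_sum_mul_sum_of_sq_le_mul t (fun i _ => hf i) (fun i _ => hg i)
      fun i _ => hrfg i).trans <|
    mul_le_mul (hf_sum.sum_le_tsum t fun i _ => hf i) (hg_sum.sum_le_tsum t fun i _ => hg i)
      (Finset.sum_nonneg fun i _ => hg i) (tsum_nonneg hf)

theorem one_div_mul_le_of_sq_le_mul {N S D : ℝ} (hN : 0 ≤ N) (hS : 0 ≤ S)
    (h : N ^ 2 ≤ S * (D * N)) : 1 / D * N ≤ S := by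
  rcases hN.eq_or_lt with rfl | hN
  · simpa using hS
  have hND : N ≤ D * S := le_of_mul_le_mul_right (by nlinarith) hN
  have hD : 0 < D := by
    by_contra! hD
    nlinarith [mul_nonpos_of_nonpos_of_nonneg hD hS]
  rw [one_div_mul_eq_div, div_le_iff₀ hD]
  linarith

theorem sq_norm_apply_le_of_apply_eq {𝕜 X Y : Type*} [NontriviallyNormedField 𝕜]
    [SeminormedAddCommGroup X] [SeminormedAddCommGroup Y] [NormedSpace 𝕜 X] [NormedSpace 𝕜 Y]
    (T : X →L[𝕜] Y) {c : ℝ} (hc : ‖T‖ ^ 2 ≤ c) {f p : X} (h : T p = T f) :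
    ‖T f‖ ^ 2 ≤ c * ‖p‖ ^ 2 :=
  calc ‖T f‖ ^ 2 ≤ ‖T‖ ^ 2 * ‖p‖ ^ 2 := by rw [← mul_pow, ← h]; gcongr; exact T.le_opNorm p
    _ ≤ c * ‖p‖ ^ 2 := by gcongr

section InnerProductSpace

variable {H : Type*} [NormedAddCommGroup H] [InnerProductSpace ℝ H]

theorem mul_real_inner_sq_le (w : ℝ) (x y : H) :
    (w * ⟪x, y⟫_ℝ) ^ 2 ≤ (w * ‖x‖ ^ 2) * (w * ‖y‖ ^ 2) := by
  have h : |⟪x, y⟫_ℝ| ^ 2 ≤ (‖x‖ * ‖y‖) ^ 2 :=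
    pow_le_pow_left₀ (abs_nonneg _) (abs_real_inner_le_norm x y) 2
  rw [sq_abs] at h
  calc (w * ⟪x, y⟫_ℝ) ^ 2 = w ^ 2 * ⟪x, y⟫_ℝ ^ 2 := mul_pow _ _ _
    _ ≤ w ^ 2 * (‖x‖ * ‖y‖) ^ 2 := by gcongr
    _ = (w * ‖x‖ ^ 2) * (w * ‖y‖ ^ 2) := by ring

theorem hasSum_mul_inner_orthogonalProjectionOnto {I : Type*} {W : I → Submodule ℝ H}
    [∀ i, (W i).HasOrthogonalProjection] {w : I → ℝ} {x : I → H} {f : H}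
    (hf : HasSum (fun i => w i • x i) f) (hx : ∀ i, x i ∈ W i) :
    HasSum (fun i => w i * ⟪x i, ((W i).orthogonalProjectionOnto f : H)⟫_ℝ) (‖f‖ ^ 2) := by
  have hx_inner : ∀ i, ⟪x i, ((W i).orthogonalProjectionOnto f : H)⟫_ℝ = ⟪f, x i⟫_ℝ := fun i =>
    (Submodule.inner_orthogonalProjectionOnto_eq_of_mem_left ⟨x i, hx i⟩ f).trans
      (real_inner_comm _ _)
  simp only [hx_inner]
  simpa [real_inner_smul_right] using (innerSL ℝ f).hasSum hf

end InnerProductSpace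

theorem resolution_of_identity_frame_bounds_general
    {H : Type*} [NormedAddCommGroup H] [InnerProductSpace ℝ H]
    {I : Type*} (W : I → Submodule ℝ H) [∀ i, CompleteSpace (W i)]
    (v : I → ℝ) (C D : ℝ)
    (hframe : ∀ f : H,
      Summable (fun i => v i ^ 2 * ‖(Submodule.orthogonalProjection (W i) f : H)‖ ^ 2) ∧
      C * ‖f‖ ^ 2 ≤ ∑' i, v i ^ 2 * ‖(Submodule.orthogonalProjection (W i) f : H)‖ ^ 2 ∧
      ∑' i, v i ^ 2 * ‖(Submodule.orthogonalProjection (W i) f : H)‖ ^ 2 ≤ D * ‖f‖ ^ 2)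
    (T : I → H →L[ℝ] H) (hTmem : ∀ i f, T i f ∈ W i)
    (hTproj : ∀ i (f : H), T i ((Submodule.orthogonalProjection (W i) f : H)) = T i f)
    (hres : ∀ f : H, HasSum (fun i => v i ^ 2 • T i f) f)
    (E : ℝ) (hE : ∀ i, ‖T i‖ ^ 2 ≤ E) :
    ∀ f : H,
      Summable (fun i => v i ^ 2 * ‖T i f‖ ^ 2) ∧
      (1 / D) * ‖f‖ ^ 2 ≤ ∑' i, v i ^ 2 * ‖T i f‖ ^ 2 ∧
      ∑' i, v i ^ 2 * ‖T i f‖ ^ 2 ≤ (D * E) * ‖f‖ ^ 2 := by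
  intro f
  obtain ⟨hP_sum, -, hP_le⟩ := hframe f
  set P : I → H := fun i => Submodule.orthogonalProjectionOnto (W i) f
  have hTP : ∀ i, v i ^ 2 * ‖T i f‖ ^ 2 ≤ E * (v i ^ 2 * ‖P i‖ ^ 2) := fun i => by
    rw [mul_left_comm]
    exact mul_le_mul_of_nonneg_left
      (sq_norm_apply_le_of_apply_eq _ (hE i) (hTproj i f)) (sq_nonneg _)
  have hT_sum : Summable fun i => v i ^ 2 * ‖T i f‖ ^ 2 :=
    (hP_sum.mul_left E).of_nonneg_of_le (fun i => by positivity) hTP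
  have hCS := sq_le_tsum_mul_tsum_of_sq_le_mul
    (hasSum_mul_inner_orthogonalProjectionOnto (hres f) (hTmem · f)) (fun i => by positivity)
    (fun i => by positivity) hT_sum hP_sum fun i => mul_real_inner_sq_le _ (T i f) (P i)
  refine ⟨hT_sum, one_div_mul_le_of_sq_le_mul (by positivity) (tsum_nonneg fun i => by positivity)
    (hCS.trans (mul_le_mul_of_nonneg_left hP_le (tsum_nonneg fun i => by positivity))), ?_⟩
  rcases isEmpty_or_nonempty I with _ | ⟨⟨i⟩⟩
  · simp [(hres f).unique hasSum_empty]
  calc ∑' i, v i ^ 2 * ‖T i f‖ ^ 2 ≤ E * ∑' i, v i ^ 2 * ‖P i‖ ^ 2 := by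
        rw [← tsum_mul_left]; exact hT_sum.tsum_le_tsum hTP (hP_sum.mul_left E)
    _ ≤ E * (D * ‖f‖ ^ 2) := mul_le_mul_of_nonneg_left hP_le ((sq_nonneg _).trans (hE i))
    _ = D * E * ‖f‖ ^ 2 := by ring

/-- If `{v_i² T_i}` is a resolution of the identity with `T_i` mapping
into `W_i` and `T_i π_{W_i} = T_i`, and `{W_i}` is a frame of subspaces with bounds
`C, D`, then with `E = sup_i ‖T_i‖²` finite,
`(1/D)‖f‖² ≤ Σ_i v_i² ‖T_i f‖² ≤ D E ‖f‖²`. -/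
theorem resolution_of_identity_frame_bounds
    {H : Type*} [NormedAddCommGroup H] [InnerProductSpace ℝ H] [CompleteSpace H]
    {I : Type*} (W : I → Submodule ℝ H) [∀ i, CompleteSpace (W i)]
    (v : I → ℝ) (hv : ∀ i, 0 < v i) (C D : ℝ) (hC : 0 < C) (hCD : C ≤ D)
    (hframe : ∀ f : H,
      Summable (fun i => v i ^ 2 * ‖(Submodule.orthogonalProjection (W i) f : H)‖ ^ 2) ∧
      C * ‖f‖ ^ 2 ≤ ∑' i, v i ^ 2 * ‖(Submodule.orthogonalProjection (W i) f : H)‖ ^ 2 ∧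
      ∑' i, v i ^ 2 * ‖(Submodule.orthogonalProjection (W i) f : H)‖ ^ 2 ≤ D * ‖f‖ ^ 2)
    (T : I → H →L[ℝ] H) (hTmem : ∀ i f, T i f ∈ W i)
    (hTproj : ∀ i (f : H), T i ((Submodule.orthogonalProjection (W i) f : H)) = T i f)
    (hres : ∀ f : H, HasSum (fun i => v i ^ 2 • T i f) f)
    (E : ℝ) (hE : ∀ i, ‖T i‖ ^ 2 ≤ E) :
    ∀ f : H,
      Summable (fun i => v i ^ 2 * ‖T i f‖ ^ 2) ∧
      (1 / D) * ‖f‖ ^ 2 ≤ ∑' i, v i ^ 2 * ‖T i f‖ ^ 2 ∧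
      ∑' i, v i ^ 2 * ‖T i f‖ ^ 2 ≤ (D * E) * ‖f‖ ^ 2 :=
  resolution_of_identity_frame_bounds_general W v C D hframe T hTmem hTproj hres E hE
end

section
/- Let {W_i}_{i∈I} be a frame of subspaces with respect to {v_i} for H. The following are equivalent: (1) {W_i} is a Riesz decomposition of H (every f ∈ H has a unique representation f = Σ_i f_i with f_i ∈ W_i); (2) {W_i} is minimal (W_i ∩ closed-span of {W_j : j ≠ i} = {0} for every i); (3) the synthesis operator T_{W,v}({f_i}) = Σ_i v_i f_i is injective on (Σ_i ⊕ W_i)_{ℓ²}; (4) the analysis operator T*_{W,v} is surjective. -/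
/-!
Since `T* f = (v i • π_{W_i} f)_i`, the lower frame bound says `√C ‖f‖ ≤ ‖T* f‖`. So `T T*` is
bounded below and self-adjoint, hence onto, and every `f` has a representation `f = ∑ v_i g_i`.
Uniqueness of representations therefore means that `0` has only the trivial one, which is
equivalent to injectivity of `T` (the weights are bounded by `‖T‖`) and follows from minimality
(each term of a representation of `0` lies in the closed span of the others). If `T` is injective,
`T*` is bounded below with dense range, hence onto. Finally, if `T* f = δ_i x` then `f ⊥ W_j` for
`j ≠ i` while `v_i ⟪x, f⟫ = ‖x‖²`, so `x = 0` as soon as `x` lies in the closed span of those `W_j`.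
-/

open scoped InnerProductSpace

namespace ContinuousLinearMap

variable {𝕜 E F : Type*} [RCLike 𝕜] [NormedAddCommGroup E] [InnerProductSpace 𝕜 E] [CompleteSpace E]
  [NormedAddCommGroup F] [InnerProductSpace 𝕜 F] [CompleteSpace F]

theorem surjective_of_bounded_below_of_injective_adjoint {A : E →L[𝕜] F} {c : ℝ} (hc : 0 < c)
    (hA : ∀ x, c * ‖x‖ ≤ ‖A x‖) (hA' : Function.Injective (adjoint A)) : Function.Surjective A := by
  have hanti : AntilipschitzWith ⟨c⁻¹, by positivity⟩ A :=
    A.antilipschitz_of_bound fun x => by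
      show ‖x‖ ≤ c⁻¹ * ‖A x‖
      rw [← div_eq_inv_mul, le_div_iff₀ hc, mul_comm]
      exact hA x
  have hclosed : IsClosed (A.range : Set F) := hanti.isClosed_range A.uniformContinuous
  have horth : A.rangeᗮ = ⊥ := by
    rw [orthogonal_range, LinearMap.ker_eq_bot]
    exact hA'
  refine LinearMap.range_eq_top.1 ?_
  rw [← hclosed.submodule_topologicalClosure_eq, ← Submodule.orthogonal_orthogonal_eq_closure,
    horth, Submodule.bot_orthogonal_eq_top]

theorem surjective_of_bounded_below_adjoint {A : E →L[𝕜] F} {c : ℝ} (hc : 0 < c)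
    (hA : ∀ y, c * ‖y‖ ≤ ‖adjoint A y‖) : Function.Surjective A := by
  have hS : ∀ y, c ^ 2 * ‖y‖ ≤ ‖(A ∘L adjoint A) y‖ := by
    intro y
    rcases (norm_nonneg y).eq_or_lt with hy | hy
    · rw [← hy, mul_zero]
      exact norm_nonneg _
    refine le_of_mul_le_mul_right ?_ hy
    calc c ^ 2 * ‖y‖ * ‖y‖ = (c * ‖y‖) ^ 2 := by ring
      _ ≤ ‖adjoint A y‖ ^ 2 := pow_le_pow_left₀ (by positivity) (hA y) 2
      _ = RCLike.re ⟪(A ∘L adjoint A) y, y⟫_𝕜 := by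
        rw [comp_apply, ← adjoint_inner_right, inner_self_eq_norm_sq]
      _ ≤ ‖(A ∘L adjoint A) y‖ * ‖y‖ := re_inner_le_norm _ _
  have hSinj : Function.Injective (adjoint (A ∘L adjoint A)) := by
    rw [adjoint_comp, adjoint_adjoint]
    refine (injective_iff_map_eq_zero _).2 fun y hy => norm_le_zero_iff.1 ?_
    have := hS y
    rw [hy, norm_zero] at this
    exact nonpos_of_mul_nonpos_right this (by positivity)
  exact Function.Surjective.of_comp (f := A) (g := adjoint A)
    (surjective_of_bounded_below_of_injective_adjoint (A := A ∘L adjoint A) (by positivity) hS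
      hSinj)

end ContinuousLinearMap

section Representations

variable {R M ι : Type*} [Ring R] [AddCommGroup M] [Module R M] [TopologicalSpace M]
  [IsTopologicalAddGroup M] [ContinuousConstSMul R M] {W : ι → Submodule R M}

theorem Submodule.mem_closure_iSup_ne_of_hasSum_zero {g : (i : ι) → W i}
    (hg : HasSum (fun j => (g j : M)) 0) (i : ι) :
    (g i : M) ∈ (⨆ j ∈ ({i}ᶜ : Set ι), W j).topologicalClosure := by
  classical
  have hrest : HasSum (Function.update (fun j => (g j : M)) i 0) (-(g i : M)) := by
    simpa using hg.update i 0
  rw [← neg_neg (g i : M)]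
  refine Submodule.neg_mem _ ?_
  rw [← SetLike.mem_coe, Submodule.topologicalClosure_coe]
  refine mem_closure_of_tendsto hrest (Filter.Eventually.of_forall fun s => ?_)
  refine Submodule.sum_mem _ fun j _ => ?_
  by_cases hji : j = i
  · subst hji
    simp
  · rw [Function.update_of_ne hji]
    exact (le_biSup W (Set.mem_compl_singleton_iff.2 hji)) (g j).2

theorem Submodule.eq_zero_of_hasSum_zero_of_inf_closure_eq_bot
    (hmin : ∀ i, W i ⊓ (⨆ j ∈ ({i}ᶜ : Set ι), W j).topologicalClosure = ⊥) {g : (i : ι) → W i}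
    (hg : HasSum (fun j => (g j : M)) 0) (i : ι) : g i = 0 := by
  have h : (g i : M) ∈ W i ⊓ (⨆ j ∈ ({i}ᶜ : Set ι), W j).topologicalClosure :=
    ⟨(g i).2, mem_closure_iSup_ne_of_hasSum_zero hg i⟩
  rw [hmin i, Submodule.mem_bot] at h
  exact Subtype.ext h

end Representations

theorem existsUnique_hasSum_iff {R E ι : Type*} [Ring R] [NormedAddCommGroup E] [Module R E]
    {W : ι → Submodule R E} {p : ENNReal}
    (hex : ∀ f : E, ∃ g : lp (fun i => W i) p, HasSum (fun i => (g i : E)) f) :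
    (∀ f : E, ∃! g : lp (fun i => W i) p, HasSum (fun i => (g i : E)) f) ↔
      ∀ g : lp (fun i => W i) p, HasSum (fun i => (g i : E)) 0 → g = 0 := by
  refine ⟨fun huniq g hg => (huniq 0).unique hg (by simp), fun hzero f => ?_⟩
  obtain ⟨g, hg⟩ := hex f
  refine ⟨g, hg, fun g' hg' => sub_eq_zero.1 (hzero _ ?_)⟩
  simpa using hg'.sub hg

theorem Submodule.mem_orthogonal_closure_iSup {𝕜 E ι : Type*} [RCLike 𝕜] [NormedAddCommGroup E]
    [InnerProductSpace 𝕜 E] {K : ι → Submodule 𝕜 E} {s : Set ι} {f : E}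
    (h : ∀ j ∈ s, f ∈ (K j)ᗮ) : f ∈ (⨆ j ∈ s, K j).topologicalClosureᗮ := by
  simpa only [Submodule.orthogonal_closure, ← Submodule.span_singleton_le_iff_mem (R := 𝕜),
    ← Submodule.isOrtho_iff_le, Submodule.isOrtho_iSup_right] using h

namespace SubspaceFrame

variable {H I : Type*} [NormedAddCommGroup H] [InnerProductSpace ℝ H] {W : I → Submodule ℝ H}
  {v : I → ℝ} {T : lp (fun i => W i) 2 →L[ℝ] H}
  (hT : ∀ g : lp (fun i => W i) 2, HasSum (fun i => v i • (g i : H)) (T g))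
include hT

theorem apply_single [DecidableEq I] (i : I) (w : W i) :
    T (lp.single (E := fun k => W k) 2 i w) = v i • (w : H) := by
  refine (hT _).unique ?_
  convert hasSum_ite_eq i (v i • (w : H)) with j
  by_cases hji : j = i
  · subst hji
    simp
  · simp [hji]

theorem norm_smul_le (i : I) (w : W i) : ‖v i • w‖ ≤ ‖T‖ * ‖w‖ := by
  classical
  calc ‖v i • w‖ = ‖T (lp.single (E := fun k => W k) 2 i w)‖ := by
        rw [apply_single hT, ← Submodule.coe_smul, Submodule.coe_norm]
    _ ≤ ‖T‖ * ‖lp.single (E := fun k => W k) 2 i w‖ := T.le_opNorm _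
    _ = ‖T‖ * ‖w‖ := by rw [lp.norm_single (by norm_num)]

theorem exists_lp_eq_smul (g : lp (fun i => W i) 2) :
    ∃ h : lp (fun i => W i) 2, ∀ i, h i = v i • g i := by
  refine ⟨⟨fun i => v i • g i, memℓp_gen ?_⟩, fun i => rfl⟩
  have hg := (lp.memℓp (‖T‖ • g)).summable (by norm_num)
  refine hg.of_nonneg_of_le (fun i => by positivity) fun i => ?_
  refine Real.rpow_le_rpow (norm_nonneg _) ?_ (by norm_num)
  simpa [norm_smul, abs_of_nonneg (norm_nonneg T)] using norm_smul_le hT i (g i)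

theorem exists_hasSum_of_surjective (hsurj : Function.Surjective T) (f : H) :
    ∃ g : lp (fun i => W i) 2, HasSum (fun i => (g i : H)) f := by
  obtain ⟨g, rfl⟩ := hsurj f
  obtain ⟨h, hh⟩ := exists_lp_eq_smul hT g
  exact ⟨h, by simpa [hh] using hT g⟩

theorem injective_of_hasSum_eq_zero (hv : ∀ i, v i ≠ 0)
    (hzero : ∀ g : lp (fun i => W i) 2, HasSum (fun i => (g i : H)) 0 → g = 0) :
    Function.Injective T := by
  refine (injective_iff_map_eq_zero T).2 fun g hg => ?_
  obtain ⟨h, hh⟩ := exists_lp_eq_smul hT g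
  have h0 : h = 0 := hzero h (by simpa [hh, hg] using hT g)
  refine lp.ext (funext fun i => ?_)
  have := congrArg (fun k : lp (fun i => W i) 2 => k i) h0
  simpa [hh, hv i] using this

variable [CompleteSpace H] [∀ i, CompleteSpace (W i)]

theorem adjoint_apply (f : H) (i : I) :
    ContinuousLinearMap.adjoint T f i = v i • (W i).orthogonalProjectionOnto f := by
  classical
  refine ext_inner_right ℝ fun w => ?_
  rw [← lp.inner_single_right, ContinuousLinearMap.adjoint_inner_left, apply_single hT,
    real_inner_smul_right, real_inner_smul_left,
    Submodule.inner_orthogonalProjectionOnto_eq_of_mem_right]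

theorem norm_adjoint_sq (f : H) :
    ‖ContinuousLinearMap.adjoint T f‖ ^ 2 =
      ∑' i, v i ^ 2 * ‖((W i).orthogonalProjectionOnto f : H)‖ ^ 2 := by
  rw [← real_inner_self_eq_norm_sq, lp.inner_eq_tsum]
  refine tsum_congr fun i => ?_
  rw [real_inner_self_eq_norm_sq, adjoint_apply hT, norm_smul, mul_pow, Real.norm_eq_abs, sq_abs,
    Submodule.coe_norm]

theorem sqrt_mul_norm_le_norm_adjoint {C : ℝ} {f : H}
    (hlow : C * ‖f‖ ^ 2 ≤ ∑' i, v i ^ 2 * ‖((W i).orthogonalProjectionOnto f : H)‖ ^ 2) :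
    √C * ‖f‖ ≤ ‖ContinuousLinearMap.adjoint T f‖ := by
  rw [← norm_adjoint_sq hT] at hlow
  simpa [Real.sqrt_mul' _ (sq_nonneg _)] using Real.sqrt_le_sqrt hlow

theorem inf_closure_iSup_ne_eq_bot_of_surjective_adjoint (hv : ∀ i, v i ≠ 0)
    (hsurj : Function.Surjective (ContinuousLinearMap.adjoint T)) (i : I) :
    W i ⊓ (⨆ j ∈ ({i}ᶜ : Set I), W j).topologicalClosure = ⊥ := by
  classical
  refine (Submodule.eq_bot_iff _).2 fun x ⟨hxi, hx⟩ => ?_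
  obtain ⟨f, hf⟩ := hsurj (lp.single (E := fun k => W k) 2 i ⟨x, hxi⟩)
  have hproj : ∀ j, v j • (W j).orthogonalProjectionOnto f =
      lp.single (E := fun k => W k) 2 i ⟨x, hxi⟩ j := fun j => by
    rw [← adjoint_apply hT, hf]
  have hperp : f ∈ (⨆ j ∈ ({i}ᶜ : Set I), W j).topologicalClosureᗮ := by
    refine Submodule.mem_orthogonal_closure_iSup fun j hj => ?_
    have := hproj j
    rw [lp.single_apply_ne (E := fun k => W k) 2 i _ hj, smul_eq_zero] at this
    exact Submodule.orthogonalProjectionOnto_eq_zero_iff.1 (this.resolve_left (hv j))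
  have hfx : ⟪x, f⟫_ℝ = 0 := Submodule.inner_right_of_mem_orthogonal hx hperp
  have hxi' : (⟨x, hxi⟩ : W i) = v i • (W i).orthogonalProjectionOnto f := by
    rw [hproj i, lp.single_apply_self]
  have hx0 : ⟪(⟨x, hxi⟩ : W i), v i • (W i).orthogonalProjectionOnto f⟫_ℝ = 0 := by
    rw [real_inner_smul_right, Submodule.inner_orthogonalProjectionOnto_eq_of_mem_left, hfx,
      mul_zero]
  rw [← hxi', inner_self_eq_zero] at hx0
  simpa using hx0

end SubspaceFrame

theorem riesz_decomposition_tfae_general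
    {H : Type*} [NormedAddCommGroup H] [InnerProductSpace ℝ H] [CompleteSpace H]
    {I : Type*} (W : I → Submodule ℝ H) [∀ i, CompleteSpace (W i)]
    (v : I → ℝ) (hv : ∀ i, 0 < v i) (C D : ℝ) (hC : 0 < C)
    (hframe : ∀ f : H,
      Summable (fun i => v i ^ 2 * ‖(Submodule.orthogonalProjectionOnto (W i) f : H)‖ ^ 2) ∧
      C * ‖f‖ ^ 2 ≤ ∑' i, v i ^ 2 * ‖(Submodule.orthogonalProjectionOnto (W i) f : H)‖ ^ 2 ∧
      ∑' i, v i ^ 2 * ‖(Submodule.orthogonalProjectionOnto (W i) f : H)‖ ^ 2 ≤ D * ‖f‖ ^ 2)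
    (T : lp (fun i => ↥(W i)) 2 →L[ℝ] H)
    (hT : ∀ g : lp (fun i => ↥(W i)) 2, HasSum (fun i => v i • (g i : H)) (T g)) :
    ((∀ f : H, ∃! g : lp (fun i => ↥(W i)) 2, HasSum (fun i => (g i : H)) f) ↔
      (∀ i, W i ⊓ (⨆ j ∈ ({i}ᶜ : Set I), W j).topologicalClosure = ⊥)) ∧
    ((∀ f : H, ∃! g : lp (fun i => ↥(W i)) 2, HasSum (fun i => (g i : H)) f) ↔
      Function.Injective T) ∧
    ((∀ f : H, ∃! g : lp (fun i => ↥(W i)) 2, HasSum (fun i => (g i : H)) f) ↔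
      Function.Surjective (ContinuousLinearMap.adjoint T)) := by
  have hv₀ : ∀ i, v i ≠ 0 := fun i => (hv i).ne'
  have hsqrtC : 0 < √C := Real.sqrt_pos.2 hC
  have hbelow : ∀ f, √C * ‖f‖ ≤ ‖ContinuousLinearMap.adjoint T f‖ := fun f =>
    SubspaceFrame.sqrt_mul_norm_le_norm_adjoint hT (hframe f).2.1
  have hex := SubspaceFrame.exists_hasSum_of_surjective hT
    (T.surjective_of_bounded_below_adjoint hsqrtC hbelow)
  have zero_to_inj := SubspaceFrame.injective_of_hasSum_eq_zero hT hv₀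
  have inj_to_surj : Function.Injective T → Function.Surjective (ContinuousLinearMap.adjoint T) :=
    fun hinj => (ContinuousLinearMap.adjoint T).surjective_of_bounded_below_of_injective_adjoint
      hsqrtC hbelow (by rwa [ContinuousLinearMap.adjoint_adjoint])
  have surj_to_min := SubspaceFrame.inf_closure_iSup_ne_eq_bot_of_surjective_adjoint hT hv₀
  have min_to_zero : (∀ i, W i ⊓ (⨆ j ∈ ({i}ᶜ : Set I), W j).topologicalClosure = ⊥) →
      ∀ g : lp (fun i => W i) 2, HasSum (fun i => (g i : H)) 0 → g = 0 := fun hmin g hg =>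
    lp.ext (funext (Submodule.eq_zero_of_hasSum_zero_of_inf_closure_eq_bot hmin hg))
  rw [existsUnique_hasSum_iff hex]
  exact ⟨⟨fun h => surj_to_min (inj_to_surj (zero_to_inj h)), min_to_zero⟩,
    ⟨zero_to_inj, fun h => min_to_zero (surj_to_min (inj_to_surj h))⟩,
    ⟨fun h => inj_to_surj (zero_to_inj h), fun h => min_to_zero (surj_to_min h)⟩⟩

/-- For a frame of subspaces with synthesis operator `T`, the
following are equivalent: (1) `{W_i}` is a Riesz decomposition of `H`; (2) `{W_i}` is
minimal; (3) `T` is injective; (4) the analysis operator `T*` is surjective. -/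
theorem riesz_decomposition_tfae
    {H : Type*} [NormedAddCommGroup H] [InnerProductSpace ℝ H] [CompleteSpace H]
    {I : Type*} (W : I → Submodule ℝ H) [∀ i, CompleteSpace (W i)]
    (v : I → ℝ) (hv : ∀ i, 0 < v i) (C D : ℝ) (hC : 0 < C) (hCD : C ≤ D)
    (hframe : ∀ f : H,
      Summable (fun i => v i ^ 2 * ‖(Submodule.orthogonalProjectionOnto (W i) f : H)‖ ^ 2) ∧
      C * ‖f‖ ^ 2 ≤ ∑' i, v i ^ 2 * ‖(Submodule.orthogonalProjectionOnto (W i) f : H)‖ ^ 2 ∧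
      ∑' i, v i ^ 2 * ‖(Submodule.orthogonalProjectionOnto (W i) f : H)‖ ^ 2 ≤ D * ‖f‖ ^ 2)
    (T : lp (fun i => ↥(W i)) 2 →L[ℝ] H)
    (hT : ∀ g : lp (fun i => ↥(W i)) 2, HasSum (fun i => v i • (g i : H)) (T g)) :
    ((∀ f : H, ∃! g : lp (fun i => ↥(W i)) 2, HasSum (fun i => (g i : H)) f) ↔
      (∀ i, W i ⊓ (⨆ j ∈ ({i}ᶜ : Set I), W j).topologicalClosure = ⊥)) ∧
    ((∀ f : H, ∃! g : lp (fun i => ↥(W i)) 2, HasSum (fun i => (g i : H)) f) ↔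
      Function.Injective T) ∧
    ((∀ f : H, ∃! g : lp (fun i => ↥(W i)) 2, HasSum (fun i => (g i : H)) f) ↔
      Function.Surjective (ContinuousLinearMap.adjoint T)) :=
  riesz_decomposition_tfae_general W v hv C D hC hframe T hT
end

section
/- Let {f_j}_{j∈J} be a frame for H with bounds A and B, let {J_i}_{i∈I} be a partition of J, and let W_i be the closed linear span of {f_j : j ∈ J_i}. Then for all f ∈ H, (A/B)‖f‖² ≤ Σ_{i∈I} ‖π_{W_i}(f)‖². Consequently, if I is finite, {W_i}_{i∈I} is a 1-uniform frame of subspaces for H with bounds A/B and |I|. -/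
open scoped InnerProductSpace ENNReal

/-!
Each piece `{f_j}_{j ∈ J_i}` is a subfamily of a `B`-Bessel family lying in `W_i`, and pairing
with vectors of `W_i` cannot distinguish `f` from `π_{W_i} f`, so
`Σ_{j ∈ J_i} ⟨f, f_j⟩² = Σ_{j ∈ J_i} ⟨π_{W_i} f, f_j⟩² ≤ B ‖π_{W_i} f‖²`.
Summing over `i` (in `ℝ≥0∞`, where no summability is needed) and using the lower frame bound
gives `A ‖f‖² ≤ B Σ_i ‖π_{W_i} f‖²`. The upper bound `|I|` holds because projections are
contractions.
-/

section Bessel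

variable {H : Type*} [NormedAddCommGroup H] [InnerProductSpace ℝ H] {J : Type*}

def IsBessel (F : J → H) (B : ℝ) : Prop :=
  ∀ f : H, Summable (fun j => ⟪f, F j⟫_ℝ ^ 2) ∧ ∑' j, ⟪f, F j⟫_ℝ ^ 2 ≤ B * ‖f‖ ^ 2

namespace IsBessel

variable {F : J → H} {B : ℝ}

theorem subtype (hF : IsBessel F B) (s : Set J) : IsBessel (fun j : s => F j) B := fun f =>
  ⟨(hF f).1.subtype s,
    ((hF f).1.tsum_subtype_le _ s fun _ => sq_nonneg _).trans (hF f).2⟩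

theorem tsum_inner_sq_le_norm_starProjection_sq (hF : IsBessel F B) (K : Submodule ℝ H)
    [K.HasOrthogonalProjection] (hK : ∀ j, F j ∈ K) (f : H) :
    ∑' j, ⟪f, F j⟫_ℝ ^ 2 ≤ B * ‖K.starProjection f‖ ^ 2 := by
  have hproj : ∀ j, ⟪f, F j⟫_ℝ = ⟪K.starProjection f, F j⟫_ℝ := fun j => by
    rw [Submodule.inner_starProjection_left_eq_right, K.starProjection_eq_self_iff.mpr (hK j)]
  simpa only [hproj] using (hF (K.starProjection f)).2

end IsBessel

end Bessel

theorem ENNReal.tsum_le_tsum_tsum_of_cover {I J : Type*} (c : J → ℝ≥0∞) (P : I → Set J)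
    (hcover : ∀ j, ∃ i, j ∈ P i) : ∑' j, c j ≤ ∑' i, ∑' j : P i, c j := by
  have hunion : ⋃ i, P i = Set.univ := Set.iUnion_eq_univ_iff.mpr hcover
  calc ∑' j, c j = ∑' j : ⋃ i, P i, c j := by rw [hunion, tsum_univ]
    _ ≤ ∑' i, ∑' j : P i, c j := ENNReal.tsum_iUnion_le_tsum c P

theorem ofReal_mul_norm_sq_le_tsum_norm_starProjection_sq
    {H : Type*} [NormedAddCommGroup H] [InnerProductSpace ℝ H]
    {J I : Type*} {F : J → H} {A B : ℝ} (hB : 0 ≤ B) (hF : IsBessel F B)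
    (hlower : ∀ f : H, A * ‖f‖ ^ 2 ≤ ∑' j, ⟪f, F j⟫_ℝ ^ 2)
    (P : I → Set J) (hcover : ∀ j, ∃ i, j ∈ P i)
    (W : I → Submodule ℝ H) [∀ i, (W i).HasOrthogonalProjection]
    (hW : ∀ i, ∀ j ∈ P i, F j ∈ W i) (f : H) :
    ENNReal.ofReal (A * ‖f‖ ^ 2) ≤
      ENNReal.ofReal B * ∑' i, ENNReal.ofReal (‖(W i).starProjection f‖ ^ 2) := by
  have hpiece : ∀ i, ∑' j : P i, ⟪f, F j⟫_ℝ ^ 2 ≤ B * ‖(W i).starProjection f‖ ^ 2 :=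
    fun i => (hF.subtype (P i)).tsum_inner_sq_le_norm_starProjection_sq (W i)
      (fun j => hW i j j.2) f
  calc ENNReal.ofReal (A * ‖f‖ ^ 2)
      ≤ ENNReal.ofReal (∑' j, ⟪f, F j⟫_ℝ ^ 2) := ENNReal.ofReal_le_ofReal (hlower f)
    _ = ∑' j, ENNReal.ofReal (⟪f, F j⟫_ℝ ^ 2) :=
      ENNReal.ofReal_tsum_of_nonneg (fun _ => sq_nonneg _) (hF f).1
    _ ≤ ∑' i, ∑' j : P i, ENNReal.ofReal (⟪f, F j⟫_ℝ ^ 2) :=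
      ENNReal.tsum_le_tsum_tsum_of_cover _ P hcover
    _ = ∑' i, ENNReal.ofReal (∑' j : P i, ⟪f, F j⟫_ℝ ^ 2) := by
      congr 1 with i
      exact (ENNReal.ofReal_tsum_of_nonneg (fun _ => sq_nonneg _) (hF.subtype (P i) f).1).symm
    _ ≤ ∑' i, ENNReal.ofReal (B * ‖(W i).starProjection f‖ ^ 2) :=
      ENNReal.tsum_le_tsum fun i => ENNReal.ofReal_le_ofReal (hpiece i)
    _ = ENNReal.ofReal B * ∑' i, ENNReal.ofReal (‖(W i).starProjection f‖ ^ 2) := by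
      simp only [ENNReal.ofReal_mul hB, ENNReal.tsum_mul_left]

theorem frame_partition_lower_bound_general
    {H : Type*} [NormedAddCommGroup H] [InnerProductSpace ℝ H]
    {J : Type*} (F : J → H) (A B : ℝ) (hA : 0 < A) (hAB : A ≤ B)
    (hframe : ∀ f : H,
      Summable (fun j => (inner ℝ f (F j) : ℝ) ^ 2) ∧
      A * ‖f‖ ^ 2 ≤ ∑' j, (inner ℝ f (F j) : ℝ) ^ 2 ∧
      ∑' j, (inner ℝ f (F j) : ℝ) ^ 2 ≤ B * ‖f‖ ^ 2)
    {I : Type*} (P : I → Set J)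
    (hcover : ∀ j : J, ∃ i, j ∈ P i)
    (W : I → Submodule ℝ H) [∀ i, CompleteSpace (W i)]
    (hW : ∀ i, W i = (Submodule.span ℝ (F '' P i)).topologicalClosure) :
    (∀ f : H,
      ENNReal.ofReal ((A / B) * ‖f‖ ^ 2) ≤
        ∑' i, ENNReal.ofReal (‖(Submodule.orthogonalProjection (W i) f : H)‖ ^ 2)) ∧
    (Finite I → ∀ f : H,
      Summable (fun i => ‖(Submodule.orthogonalProjection (W i) f : H)‖ ^ 2) ∧
      (A / B) * ‖f‖ ^ 2 ≤ ∑' i, ‖(Submodule.orthogonalProjection (W i) f : H)‖ ^ 2 ∧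
      ∑' i, ‖(Submodule.orthogonalProjection (W i) f : H)‖ ^ 2 ≤ (Nat.card I : ℝ) * ‖f‖ ^ 2) := by
  have hB : 0 < B := hA.trans_le hAB
  have hmem : ∀ i, ∀ j ∈ P i, F j ∈ W i := fun i j hj => hW i ▸
    Submodule.le_topologicalClosure _ (Submodule.subset_span ⟨j, hj, rfl⟩)
  have hlower : ∀ f : H, ENNReal.ofReal ((A / B) * ‖f‖ ^ 2) ≤
      ∑' i, ENNReal.ofReal (‖(W i).starProjection f‖ ^ 2) := fun f => by
    rw [div_mul_eq_mul_div, ENNReal.ofReal_div_of_pos hB]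
    exact ENNReal.div_le_of_le_mul' <| ofReal_mul_norm_sq_le_tsum_norm_starProjection_sq hB.le
      (fun g => ⟨(hframe g).1, (hframe g).2.2⟩) (fun g => (hframe g).2.1) P hcover W hmem f
  refine ⟨hlower, fun _ f => ?_⟩
  have : Fintype I := .ofFinite I
  have hsum : Summable fun i => ‖(W i).starProjection f‖ ^ 2 := .of_finite
  refine ⟨hsum, ?_, ?_⟩
  · have h := hlower f
    rw [← ENNReal.ofReal_tsum_of_nonneg (fun _ => sq_nonneg _) hsum] at h
    exact (ENNReal.ofReal_le_ofReal_iff (tsum_nonneg fun _ => sq_nonneg _)).mp h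
  · calc ∑' i, ‖(W i).starProjection f‖ ^ 2 ≤ ∑' _ : I, ‖f‖ ^ 2 :=
          Summable.tsum_le_tsum (fun i => pow_le_pow_left₀ (norm_nonneg _)
            ((W i).norm_starProjection_apply_le f) 2) hsum .of_finite
      _ = (Nat.card I : ℝ) * ‖f‖ ^ 2 := by simp [tsum_fintype, Nat.card_eq_fintype_card]

/-- Partitioning a frame `{f_j}` with bounds `A, B` into pieces
spanning subspaces `W_i` gives `(A/B)‖f‖² ≤ Σ_i ‖π_{W_i} f‖²` (right side in `[0,∞]`);
if `I` is finite, `{W_i}` is a 1-uniform frame of subspaces with bounds `A/B`, `|I|`. -/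
theorem frame_partition_lower_bound
    {H : Type*} [NormedAddCommGroup H] [InnerProductSpace ℝ H] [CompleteSpace H]
    {J : Type*} (F : J → H) (A B : ℝ) (hA : 0 < A) (hAB : A ≤ B)
    (hframe : ∀ f : H,
      Summable (fun j => (inner ℝ f (F j) : ℝ) ^ 2) ∧
      A * ‖f‖ ^ 2 ≤ ∑' j, (inner ℝ f (F j) : ℝ) ^ 2 ∧
      ∑' j, (inner ℝ f (F j) : ℝ) ^ 2 ≤ B * ‖f‖ ^ 2)
    {I : Type*} (P : I → Set J)
    (hcover : ∀ j : J, ∃ i, j ∈ P i) (hdisj : Pairwise (Function.onFun Disjoint P))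
    (W : I → Submodule ℝ H) [∀ i, CompleteSpace (W i)]
    (hW : ∀ i, W i = (Submodule.span ℝ (F '' P i)).topologicalClosure) :
    (∀ f : H,
      ENNReal.ofReal ((A / B) * ‖f‖ ^ 2) ≤
        ∑' i, ENNReal.ofReal (‖(Submodule.orthogonalProjection (W i) f : H)‖ ^ 2)) ∧
    (Finite I → ∀ f : H,
      Summable (fun i => ‖(Submodule.orthogonalProjection (W i) f : H)‖ ^ 2) ∧
      (A / B) * ‖f‖ ^ 2 ≤ ∑' i, ‖(Submodule.orthogonalProjection (W i) f : H)‖ ^ 2 ∧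
      ∑' i, ‖(Submodule.orthogonalProjection (W i) f : H)‖ ^ 2 ≤ (Nat.card I : ℝ) * ‖f‖ ^ 2) :=
  frame_partition_lower_bound_general F A B hA hAB hframe P hcover W hW
end

section
/- Let {f_j}_{j∈J} be a frame for H with bounds A, B, let J = J_1 ∪ … ∪ J_n be a finite partition, let v_1,…,v_n > 0, and let W_i be the closed span of {f_j : j ∈ J_i}. Then {W_i}_{i=1}^n is a frame of subspaces with respect to {v_i}_{i=1}^n for H, with lower bound (A/B)·min_i v_i² and upper bound n·max_i v_i². -/
open scoped InnerProductSpace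

/-! The frame vectors indexed by `P i` lie in `W i`, so their inner products with `f` and with
its projection `π_{W i} f` agree. The upper frame inequality applied to `π_{W i} f` therefore
bounds the part of the frame sum over `P i` by `B ‖π_{W i} f‖²`; summing over the pieces, which
cover `J`, and using the lower frame inequality gives `A ‖f‖² ≤ B ∑ᵢ ‖π_{W i} f‖²`. The upper
bound only needs `‖π_{W i} f‖ ≤ ‖f‖`. -/

section

variable {𝕜 E : Type*} [RCLike 𝕜] [NormedAddCommGroup E] [InnerProductSpace 𝕜 E]

theorem Submodule.inner_starProjection_left_of_mem (K : Submodule 𝕜 E)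
    [K.HasOrthogonalProjection] (f : E) {x : E} (hx : x ∈ K) :
    ⟪K.starProjection f, x⟫_𝕜 = ⟪f, x⟫_𝕜 := by
  rw [K.inner_starProjection_left_eq_right, Submodule.starProjection_eq_self_iff.mpr hx]

theorem sum_mul_norm_sq_starProjection_le {ι : Type*} [Fintype ι] (K : ι → Submodule 𝕜 E)
    [∀ i, (K i).HasOrthogonalProjection] (w : ι → ℝ) (hw : ∀ i, 0 ≤ w i) (f : E) :
    ∑ i, w i * ‖(K i).starProjection f‖ ^ 2 ≤ (Fintype.card ι * ⨆ i, w i) * ‖f‖ ^ 2 := by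
  calc ∑ i, w i * ‖(K i).starProjection f‖ ^ 2
      ≤ ∑ _i : ι, (⨆ i, w i) * ‖f‖ ^ 2 := by
        refine Finset.sum_le_sum fun i _ => ?_
        have hwi : w i ≤ ⨆ i, w i := le_ciSup (Finite.bddAbove_range w) i
        have hproj := (K i).norm_starProjection_apply_le f
        gcongr
        exact (hw i).trans hwi
    _ = (Fintype.card ι * ⨆ i, w i) * ‖f‖ ^ 2 := by
        rw [Finset.sum_const, Finset.card_univ, nsmul_eq_mul, mul_assoc]

end

theorem iInf_mul_sum_le_sum_mul {ι : Type*} [Fintype ι] (w x : ι → ℝ) (hx : ∀ i, 0 ≤ x i) :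
    (⨅ i, w i) * ∑ i, x i ≤ ∑ i, w i * x i := by
  rw [Finset.mul_sum]
  exact Finset.sum_le_sum fun i _ =>
    mul_le_mul_of_nonneg_right (ciInf_le (Finite.bddBelow_range w) i) (hx i)

theorem Summable.tsum_le_sum_tsum_of_cover {J ι : Type*} [Fintype ι] {a : J → ℝ}
    (ha : Summable a) (h0 : ∀ j, 0 ≤ a j) (P : ι → Set J) (hP : ∀ j, ∃ i, j ∈ P i) :
    ∑' j, a j ≤ ∑ i, ∑' j : P i, a j := by
  choose φ hφ using hP
  have hfiber : ∀ i, φ ⁻¹' {i} ⊆ P i := by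
    rintro i j rfl
    exact hφ j
  rw [← (ha.hasSum.tsum_fiberwise φ).tsum_eq, tsum_fintype]
  exact Finset.sum_le_sum fun i _ =>
    (ha.subtype _).tsum_le_tsum_of_inj (Set.inclusion (hfiber i))
      (Set.inclusion_injective (hfiber i)) (fun _ _ => h0 _) (fun _ => le_rfl) (ha.subtype _)

theorem tsum_inner_sq_subtype_le_of_mem {H J : Type*} [NormedAddCommGroup H]
    [InnerProductSpace ℝ H] (F : J → H) {B : ℝ}
    (hsum : ∀ g, Summable fun j => ⟪g, F j⟫_ℝ ^ 2) (hB : ∀ g, ∑' j, ⟪g, F j⟫_ℝ ^ 2 ≤ B * ‖g‖ ^ 2)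
    (K : Submodule ℝ H) [K.HasOrthogonalProjection] {S : Set J} (hS : ∀ j ∈ S, F j ∈ K)
    (f : H) : ∑' j : S, ⟪f, F j⟫_ℝ ^ 2 ≤ B * ‖K.starProjection f‖ ^ 2 := by
  calc ∑' j : S, ⟪f, F j⟫_ℝ ^ 2
      = ∑' j : S, ⟪K.starProjection f, F j⟫_ℝ ^ 2 := by
        refine tsum_congr fun j => ?_
        rw [K.inner_starProjection_left_of_mem f (hS j j.2)]
    _ ≤ ∑' j, ⟪K.starProjection f, F j⟫_ℝ ^ 2 :=
        Summable.tsum_subtype_le _ S (fun _ => sq_nonneg _) (hsum _)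
    _ ≤ B * ‖K.starProjection f‖ ^ 2 := hB _

theorem finite_partition_fusionFrame_general
    {H : Type*} [NormedAddCommGroup H] [InnerProductSpace ℝ H]
    {J : Type*} (F : J → H) (A B : ℝ) (hA : 0 < A) (hAB : A ≤ B)
    (hframe : ∀ f : H,
      Summable (fun j => (inner ℝ f (F j) : ℝ) ^ 2) ∧
      A * ‖f‖ ^ 2 ≤ ∑' j, (inner ℝ f (F j) : ℝ) ^ 2 ∧
      ∑' j, (inner ℝ f (F j) : ℝ) ^ 2 ≤ B * ‖f‖ ^ 2)
    {n : ℕ} (P : Fin n → Set J)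
    (hcover : ∀ j : J, ∃ i, j ∈ P i)
    (v : Fin n → ℝ)
    (W : Fin n → Submodule ℝ H) [∀ i, CompleteSpace (W i)]
    (hW : ∀ i, W i = (Submodule.span ℝ (F '' P i)).topologicalClosure) :
    ∀ f : H,
      ((A / B) * ⨅ i, v i ^ 2) * ‖f‖ ^ 2 ≤
        ∑' i, v i ^ 2 * ‖((W i).orthogonalProjectionOnto f : H)‖ ^ 2 ∧
      ∑' i, v i ^ 2 * ‖((W i).orthogonalProjectionOnto f : H)‖ ^ 2 ≤
        ((n : ℝ) * ⨆ i, v i ^ 2) * ‖f‖ ^ 2 := by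
  intro f
  have hB : 0 < B := hA.trans_le hAB
  have hFW : ∀ i, ∀ j ∈ P i, F j ∈ W i := fun i j hj =>
    hW i ▸ Submodule.le_topologicalClosure _ (Submodule.subset_span ⟨j, hj, rfl⟩)
  have hpiece : ∀ i, ∑' j : P i, ⟪f, F j⟫_ℝ ^ 2 ≤ B * ‖(W i).starProjection f‖ ^ 2 := fun i =>
    tsum_inner_sq_subtype_le_of_mem F (fun g => (hframe g).1) (fun g => (hframe g).2.2)
      (W i) (hFW i) f
  have hm : 0 ≤ ⨅ i, v i ^ 2 := Real.iInf_nonneg fun i => sq_nonneg _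
  simp only [Submodule.coe_orthogonalProjectionOnto_apply, tsum_fintype]
  refine ⟨?_, by
    simpa using sum_mul_norm_sq_starProjection_le W (fun i => v i ^ 2) (fun i => sq_nonneg _) f⟩
  calc ((A / B) * ⨅ i, v i ^ 2) * ‖f‖ ^ 2
      = (⨅ i, v i ^ 2) / B * (A * ‖f‖ ^ 2) := by ring
    _ ≤ (⨅ i, v i ^ 2) / B * ∑ i, B * ‖(W i).starProjection f‖ ^ 2 := by
        gcongr
        exact (hframe f).2.1.trans <|
          ((hframe f).1.tsum_le_sum_tsum_of_cover (fun _ => sq_nonneg _) P hcover).trans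
            (Finset.sum_le_sum fun i _ => hpiece i)
    _ = (⨅ i, v i ^ 2) * ∑ i, ‖(W i).starProjection f‖ ^ 2 := by
        rw [← Finset.mul_sum]
        field_simp
    _ ≤ ∑ i, v i ^ 2 * ‖(W i).starProjection f‖ ^ 2 :=
        iInf_mul_sum_le_sum_mul _ _ fun _ => sq_nonneg _

/-- A finite partition of a frame `{f_j}` with bounds `A, B` into `n`
pieces spanning subspaces `W_1, …, W_n`, with weights `v_1, …, v_n > 0`, yields a frame
of subspaces with lower bound `(A/B)·min_i v_i²` and upper bound `n·max_i v_i²`. -/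
theorem finite_partition_fusionFrame
    {H : Type*} [NormedAddCommGroup H] [InnerProductSpace ℝ H] [CompleteSpace H]
    {J : Type*} (F : J → H) (A B : ℝ) (hA : 0 < A) (hAB : A ≤ B)
    (hframe : ∀ f : H,
      Summable (fun j => (inner ℝ f (F j) : ℝ) ^ 2) ∧
      A * ‖f‖ ^ 2 ≤ ∑' j, (inner ℝ f (F j) : ℝ) ^ 2 ∧
      ∑' j, (inner ℝ f (F j) : ℝ) ^ 2 ≤ B * ‖f‖ ^ 2)
    {n : ℕ} (hn : 0 < n) (P : Fin n → Set J)
    (hcover : ∀ j : J, ∃ i, j ∈ P i) (hdisj : Pairwise (Function.onFun Disjoint P))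
    (v : Fin n → ℝ) (hv : ∀ i, 0 < v i)
    (W : Fin n → Submodule ℝ H) [∀ i, CompleteSpace (W i)]
    (hW : ∀ i, W i = (Submodule.span ℝ (F '' P i)).topologicalClosure) :
    ∀ f : H,
      ((A / B) * ⨅ i, v i ^ 2) * ‖f‖ ^ 2 ≤
        ∑' i, v i ^ 2 * ‖((W i).orthogonalProjectionOnto f : H)‖ ^ 2 ∧
      ∑' i, v i ^ 2 * ‖((W i).orthogonalProjectionOnto f : H)‖ ^ 2 ≤
        ((n : ℝ) * ⨆ i, v i ^ 2) * ‖f‖ ^ 2 :=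
  finite_partition_fusionFrame_general F A B hA hAB hframe P hcover v W hW
end
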